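/- arXiv:2605.15522 — 14 statements merged into one kernel-verified Lean document; each statement's English description precedes it below -/
import Mathlib

section
/- Let f : ℝ^d → ℝ be differentiable with minimizer f* and constants M₀, M₁ > 0 satisfying ‖∇f(x)‖ ≤ M₀ + M₁(f(x) - f*) for all x. Then for all x, x' ∈ ℝ^d, |f(x') - f(x)| ≤ ((M₀/M₁) + (f(x) - f*)) · (exp(M₁‖x' - x‖) - 1). -/
/-!
The shifted function `g = M₀ / M₁ + (f - f*)` satisfies `‖∇g‖ ≤ M₁ g` (which forces `g ≥ 0`),
so Grönwall's inequality along the segment from `x` to `x'` gives `g x' ≤ g x · E` and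
`g x ≤ g x' · E` with `E = exp (M₁ ‖x' - x‖)`. These two one-sided bounds combine to
`|g x' - g x| ≤ g x · (E - 1)`, and `g x' - g x = f x' - f x`.
-/

open Real

theorem norm_fderiv_eq_norm_gradient {F : Type*} [NormedAddCommGroup F] [InnerProductSpace ℝ F]
    [CompleteSpace F] (f : F → ℝ) (x : F) : ‖fderiv ℝ f x‖ = ‖gradient f x‖ :=
  ((InnerProductSpace.toDual ℝ F).symm.norm_map _).symm

theorem abs_le_abs_mul_exp_of_norm_fderiv_le {E : Type*} [NormedAddCommGroup E]
    [NormedSpace ℝ E] {g : E → ℝ} {K : ℝ} (hg : Differentiable ℝ g)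
    (hbound : ∀ x, ‖fderiv ℝ g x‖ ≤ K * |g x|) (a b : E) :
    |g b| ≤ |g a| * exp (K * ‖b - a‖) := by
  set γ : ℝ → E := fun t => a + t • (b - a)
  have hγ : ∀ t, HasDerivAt γ (b - a) t := fun t => by
    simpa [γ] using ((hasDerivAt_id t).smul_const (b - a)).const_add a
  have hderiv : ∀ t, HasDerivAt (g ∘ γ) (fderiv ℝ g (γ t) (b - a)) t := fun t =>
    (hg (γ t)).hasFDerivAt.comp_hasDerivAt t (hγ t)
  have hderiv_le : ∀ t, ‖fderiv ℝ g (γ t) (b - a)‖ ≤ (K * ‖b - a‖) * ‖(g ∘ γ) t‖ + 0 :=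
    fun t => calc
      ‖fderiv ℝ g (γ t) (b - a)‖ ≤ ‖fderiv ℝ g (γ t)‖ * ‖b - a‖ := (fderiv ℝ g (γ t)).le_opNorm _
      _ ≤ K * |g (γ t)| * ‖b - a‖ := by gcongr; exact hbound _
      _ = (K * ‖b - a‖) * ‖(g ∘ γ) t‖ + 0 := by
        simp only [Function.comp, Real.norm_eq_abs]; ring
  have hgronwall := norm_le_gronwallBound_of_norm_deriv_right_le (a := 0) (b := 1)
    (fun t _ => (hderiv t).continuousAt.continuousWithinAt)
    (fun t _ => (hderiv t).hasDerivWithinAt) le_rfl (fun t _ => hderiv_le t) 1 (by norm_num)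
  simpa [γ, gronwallBound_ε0] using hgronwall

theorem abs_sub_le_mul_sub_one_of_le_mul {A B E : ℝ} (hE : 1 ≤ E)
    (hBA : B ≤ A * E) (hAB : A ≤ B * E) : |B - A| ≤ A * (E - 1) := by
  rw [abs_le]
  constructor
  · nlinarith
  · linarith

theorem generalized_lipschitz_of_grad_bound_general {d : ℕ}
    (f : EuclideanSpace ℝ (Fin d) → ℝ) (xstar : EuclideanSpace ℝ (Fin d)) (M₀ M₁ : ℝ)
    (hf : ContDiff ℝ 1 f)
    (hM₁ : 0 < M₁)
    (hgrad : ∀ x, ‖gradient f x‖ ≤ M₀ + M₁ * (f x - f xstar)) :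
    ∀ x x' : EuclideanSpace ℝ (Fin d),
      |f x' - f x| ≤ (M₀ / M₁ + (f x - f xstar)) * (Real.exp (M₁ * ‖x' - x‖) - 1) := by
  intro x x'
  set g := fun y => M₀ / M₁ + (f y - f xstar)
  have hg_diff : Differentiable ℝ g :=
    ((hf.differentiable one_ne_zero).sub_const _).const_add _
  have hfderiv_g : ∀ y, ‖fderiv ℝ g y‖ ≤ M₁ * g y := fun y => by
    have hM : M₀ + M₁ * (f y - f xstar) = M₁ * g y := by simp only [g]; field_simp
    simp only [g, fderiv_const_add, fderiv_sub_const, norm_fderiv_eq_norm_gradient, ← hM, hgrad]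
  have hg_nonneg : ∀ y, 0 ≤ g y := fun y =>
    nonneg_of_mul_nonneg_right ((norm_nonneg _).trans (hfderiv_g y)) hM₁
  have hgrowth : ∀ a b, g b ≤ g a * exp (M₁ * ‖b - a‖) := fun a b => by
    simpa only [abs_of_nonneg (hg_nonneg _)] using
      abs_le_abs_mul_exp_of_norm_fderiv_le hg_diff
        (fun y => (abs_of_nonneg (hg_nonneg y)).symm ▸ hfderiv_g y) a b
  have hdiff : f x' - f x = g x' - g x := by simp only [g]; ring
  rw [hdiff]
  refine abs_sub_le_mul_sub_one_of_le_mul (one_le_exp (by positivity)) (hgrowth x x') ?_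
  simpa only [norm_sub_rev] using hgrowth x' x

theorem generalized_lipschitz_of_grad_bound {d : ℕ}
    (f : EuclideanSpace ℝ (Fin d) → ℝ) (xstar : EuclideanSpace ℝ (Fin d)) (M₀ M₁ : ℝ)
    (hf : ContDiff ℝ 1 f)
    (hmin : ∀ y, f xstar ≤ f y)
    (hM₀ : 0 < M₀) (hM₁ : 0 < M₁)
    (hgrad : ∀ x, ‖gradient f x‖ ≤ M₀ + M₁ * (f x - f xstar)) :
    ∀ x x' : EuclideanSpace ℝ (Fin d),
      |f x' - f x| ≤ (M₀ / M₁ + (f x - f xstar)) * (Real.exp (M₁ * ‖x' - x‖) - 1) :=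
  generalized_lipschitz_of_grad_bound_general f xstar M₀ M₁ hf hM₁ hgrad
end

section
/- Let f : ℝ^d → ℝ be differentiable with minimizer f* and suppose that for all x, x', |f(x') - f(x)| ≤ ((M₀/M₁) + (f(x) - f*)) · (exp(M₁‖x' - x‖) - 1), with M₀, M₁ > 0. Then ‖∇f(x)‖ ≤ M₀ + M₁(f(x) - f*) for all x ∈ ℝ^d. -/
/-!
Fix `x` and put `C = M₀ / M₁ + (f x - f*)`. The hypothesis bounds the increment `f (x + y) - f x`
by `φ ‖y‖` with `φ t = C (exp (M₁ t) - 1)`, a function vanishing at `0` with `φ'(0) = C M₁`.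
Comparing one-sided difference quotients at `t = 0⁺` along a ray `t ↦ x + t v` gives
`Df(x) v ≤ φ'(0) ‖v‖`, hence `‖∇f(x)‖ = ‖Df(x)‖ ≤ C M₁ = M₀ + M₁ (f x - f*)`.
-/

open Real Filter Topology

theorem HasDerivAt.le_of_eventually_le_nhdsGT {g h : ℝ → ℝ} {a b x : ℝ}
    (hg : HasDerivAt g a x) (hh : HasDerivAt h b x) (hx : g x = h x)
    (hle : ∀ᶠ t in 𝓝[>] x, g t ≤ h t) : a ≤ b := by
  have slope_tendsto {u : ℝ → ℝ} {c : ℝ} (hu : HasDerivAt u c x) :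
      Tendsto (slope u x) (𝓝[>] x) (𝓝 c) :=
    (hasDerivAt_iff_tendsto_slope.mp hu).mono_left (nhdsWithin_mono _ fun _ ht => ne_of_gt ht)
  refine le_of_tendsto_of_tendsto (slope_tendsto hg) (slope_tendsto hh) ?_
  filter_upwards [hle, self_mem_nhdsWithin] with t hgh (ht : x < t)
  rw [slope_def_field, slope_def_field, hx]
  exact div_le_div_of_nonneg_right (by linarith) (sub_pos.mpr ht).le

section

variable {E : Type*} [NormedAddCommGroup E] [NormedSpace ℝ E] {f : E → ℝ} {L : E →L[ℝ] ℝ}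
  {x : E} {φ : ℝ → ℝ} {c : ℝ}

theorem HasFDerivAt.apply_le_of_sub_le (hf : HasFDerivAt f L x) (hφ : HasDerivAt φ c 0)
    (hφ0 : φ 0 = 0) (hle : ∀ y, f (x + y) - f x ≤ φ ‖y‖) (v : E) : L v ≤ c * ‖v‖ := by
  have hray : HasDerivAt (fun t : ℝ => f (x + t • v) - f x) (L v) 0 := by
    refine (hf.comp_hasDerivAt_of_eq 0 ?_ (by simp)).sub_const (f x)
    simpa using ((hasDerivAt_id (0 : ℝ)).smul_const v).const_add x
  have hbound : HasDerivAt (fun t : ℝ => φ (t * ‖v‖)) (c * ‖v‖) 0 :=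
    hφ.comp_of_eq 0 (hasDerivAt_mul_const ‖v‖) (zero_mul _).symm
  refine hray.le_of_eventually_le_nhdsGT hbound (by simp [hφ0]) ?_
  filter_upwards [self_mem_nhdsWithin] with t (ht : 0 < t)
  simpa [norm_smul, _root_.abs_of_pos ht] using hle (t • v)

theorem HasFDerivAt.norm_le_of_sub_le (hf : HasFDerivAt f L x) (hφ : HasDerivAt φ c 0)
    (hφ0 : φ 0 = 0) (hle : ∀ y, f (x + y) - f x ≤ φ ‖y‖) (hc : 0 ≤ c) : ‖L‖ ≤ c := by
  refine L.opNorm_le_bound hc fun v => abs_le.mpr ⟨?_, hf.apply_le_of_sub_le hφ hφ0 hle v⟩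
  have := hf.apply_le_of_sub_le hφ hφ0 hle (-v)
  rw [map_neg, norm_neg] at this
  linarith

end

theorem norm_gradient_eq_norm_fderiv {F : Type*} [NormedAddCommGroup F] [InnerProductSpace ℝ F]
    [CompleteSpace F] (f : F → ℝ) (x : F) : ‖gradient f x‖ = ‖fderiv ℝ f x‖ :=
  (InnerProductSpace.toDual ℝ F).symm.norm_map _

theorem grad_bound_of_generalized_lipschitz {d : ℕ}
    (f : EuclideanSpace ℝ (Fin d) → ℝ) (xstar : EuclideanSpace ℝ (Fin d)) (M₀ M₁ : ℝ)
    (hf : Differentiable ℝ f)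
    (hmin : ∀ y, f xstar ≤ f y)
    (hM₀ : 0 < M₀) (hM₁ : 0 < M₁)
    (hlip : ∀ x x' : EuclideanSpace ℝ (Fin d),
      |f x' - f x| ≤ (M₀ / M₁ + (f x - f xstar)) * (Real.exp (M₁ * ‖x' - x‖) - 1)) :
    ∀ x, ‖gradient f x‖ ≤ M₀ + M₁ * (f x - f xstar) := by
  intro x
  set C := M₀ / M₁ + (f x - f xstar)
  have hCM₁ : C * M₁ = M₀ + M₁ * (f x - f xstar) := by
    rw [add_mul, div_mul_cancel₀ _ hM₁.ne']
    ring
  have hφ : HasDerivAt (fun t => C * (exp (M₁ * t) - 1)) (C * M₁) 0 := by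
    simpa using (((hasDerivAt_id (0 : ℝ)).const_mul M₁).exp.sub_const 1).const_mul C
  rw [norm_gradient_eq_norm_fderiv, ← hCM₁]
  refine (hf x).hasFDerivAt.norm_le_of_sub_le hφ (by simp) (fun y => ?_) ?_
  · simpa using (le_abs_self _).trans (hlip x (x + y))
  · rw [hCM₁]
    exact add_nonneg hM₀.le (mul_nonneg hM₁.le (sub_nonneg.mpr (hmin x)))
end

section
/- Let p > 1, A an n×d real matrix, b ∈ ℝ^n, and f(x) = ‖Ax - b‖_∞^p. Then for every M₁ > 0, f is (M₀, M₁)-generalized-Lipschitz with M₀ = ‖A‖_op^p · ((p-1)/M₁)^(p-1) + M₁ f*, i.e., every subgradient g of f at x satisfies ‖g‖ ≤ M₀ + M₁(f(x) - f*), where f* = inf f. -/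
open Real
open scoped RealInnerProductSpace

/-- Key Young-type inequality: `p * (a * r^(p-1)) ≤ a^p + (p-1) * r^p`. -/
lemma young_aux {p : ℝ} (hp : 1 < p) {a r : ℝ} (ha : 0 ≤ a) (hr : 0 ≤ r) :
    p * (a * r ^ (p - 1)) ≤ a ^ p + (p - 1) * r ^ p := by
  have hpq : p.HolderConjugate (p / (p - 1)) :=
    Real.HolderConjugate.conjExponent hp
  have h := Real.young_inequality_of_nonneg ha (Real.rpow_nonneg hr (p - 1)) hpq
  have hrp : (r ^ (p - 1)) ^ (p / (p - 1)) = r ^ p := by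
    rw [← Real.rpow_mul hr]
    congr 1
    rw [mul_comm, div_mul_cancel₀ _ (by linarith : p - (1:ℝ) ≠ 0)]
  rw [hrp] at h
  have hp0 : 0 < p := by linarith
  have hp1 : 0 < p - 1 := by linarith
  have := mul_le_mul_of_nonneg_left h hp0.le
  calc p * (a * r ^ (p - 1)) ≤ p * (a ^ p / p + r ^ p / (p / (p - 1))) := this
    _ = a ^ p + (p - 1) * r ^ p := by
        field_simp

lemma pi_norm_le_euclidean {n : ℕ} (w : EuclideanSpace ℝ (Fin n)) :
    ‖(fun i => w i : Fin n → ℝ)‖ ≤ ‖w‖ := by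
  rw [pi_norm_le_iff_of_nonneg (norm_nonneg w)]
  intro i
  rw [EuclideanSpace.norm_eq]
  calc ‖w i‖ = Real.sqrt (‖w i‖ ^ 2) := (Real.sqrt_sq (norm_nonneg _)).symm
    _ ≤ Real.sqrt (∑ j, ‖w j‖ ^ 2) := by
        apply Real.sqrt_le_sqrt
        exact Finset.single_le_sum (fun j _ => sq_nonneg ‖w j‖) (Finset.mem_univ i)

set_option maxHeartbeats 1000000 in
theorem powered_infNorm_generalized_lipschitz {d n : ℕ}
    (A : EuclideanSpace ℝ (Fin d) →L[ℝ] EuclideanSpace ℝ (Fin n))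
    (b : EuclideanSpace ℝ (Fin n)) (p M₁ : ℝ) (hp : 1 < p) (hM₁ : 0 < M₁)
    (f : EuclideanSpace ℝ (Fin d) → ℝ)
    -- f(x) = ‖A x - b‖_∞ ^ p, where ‖·‖_∞ is the sup-norm (the Pi-type norm on Fin n → ℝ)
    (hf : ∀ x, f x = ‖(fun i => (A x - b) i : Fin n → ℝ)‖ ^ p)
    (fstar : ℝ) (hfstar : fstar = ⨅ x, f x) :
    ∀ (x g : EuclideanSpace ℝ (Fin d)),
      (∀ y, f x + ⟪g, y - x⟫ ≤ f y) →
      ‖g‖ ≤ (‖A‖ ^ p * ((p - 1) / M₁) ^ (p - 1) + M₁ * fstar) + M₁ * (f x - fstar) := by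
  intro x g hg
  set K : ℝ := ‖A‖ with hK
  have hK0 : 0 ≤ K := norm_nonneg A
  set C : ℝ := K ^ p * ((p - 1) / M₁) ^ (p - 1) with hC
  have hp1 : (0:ℝ) < p - 1 := by linarith
  have hc : (0:ℝ) < (p - 1) / M₁ := div_pos hp1 hM₁
  have hC0 : 0 ≤ C := mul_nonneg (Real.rpow_nonneg hK0 p) (Real.rpow_nonneg hc.le _)
  set s : ℝ := ‖(fun i => (A x - b) i : Fin n → ℝ)‖ with hs
  have hs0 : 0 ≤ s := norm_nonneg _
  have hfx : f x = s ^ p := hf x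
  have hfx0 : 0 ≤ f x := hfx ▸ Real.rpow_nonneg hs0 p
  -- it suffices to show ‖g‖ ≤ C + M₁ * f x
  suffices h : ‖g‖ ≤ C + M₁ * f x by linarith
  -- key pointwise inequality from Young
  have key : ∀ r : ℝ, 0 ≤ r → p * K * r ^ (p - 1) ≤ C + M₁ * r ^ p := by
    intro r hr
    have ha : 0 ≤ K * ((p - 1) / M₁) := mul_nonneg hK0 hc.le
    have h := young_aux hp ha hr
    have hap : (K * ((p - 1) / M₁)) ^ p = K ^ p * ((p - 1) / M₁) ^ p :=
      Real.mul_rpow hK0 hc.le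
    have hcp : ((p - 1) / M₁) ^ p = ((p - 1) / M₁) ^ (p - 1) * ((p - 1) / M₁) := by
      rw [← Real.rpow_add_one hc.ne' (p - 1)]; congr 1; ring
    rw [hap, hcp] at h
    have h2 := mul_le_mul_of_nonneg_left h (le_of_lt (div_pos hM₁ hp1))
    calc p * K * r ^ (p - 1)
        = M₁ / (p - 1) * (p * (K * ((p - 1) / M₁) * r ^ (p - 1))) := by
          field_simp
      _ ≤ M₁ / (p - 1) * (K ^ p * (((p - 1) / M₁) ^ (p - 1) * ((p - 1) / M₁)) + (p - 1) * r ^ p) := h2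
      _ = C + M₁ * r ^ p := by rw [hC]; field_simp
  rcases eq_or_ne g 0 with rfl | hg0
  · rw [norm_zero]
    have := mul_nonneg hM₁.le hfx0
    linarith
  -- for every t > 0, ‖g‖ ≤ C + M₁ * (s + t*K)^p
  have step : ∀ t : ℝ, 0 < t → ‖g‖ ≤ C + M₁ * (s + t * K) ^ p := by
    intro t ht
    set u : EuclideanSpace ℝ (Fin d) := ‖g‖⁻¹ • g with hu
    have hgn : (0:ℝ) < ‖g‖ := norm_pos_iff.mpr hg0
    have hun : ‖u‖ = 1 := by
      rw [hu, norm_smul, norm_inv, norm_norm, inv_mul_cancel₀ hgn.ne']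
    have hinner : ⟪g, (x + t • u) - x⟫ = t * ‖g‖ := by
      rw [add_sub_cancel_left, hu, inner_smul_right, inner_smul_right,
        real_inner_self_eq_norm_sq]
      field_simp
    have hAu : ‖A u‖ ≤ K := by
      calc ‖A u‖ ≤ K * ‖u‖ := A.le_opNorm u
        _ = K := by rw [hun, mul_one]
    -- bound f (x + t • u)
    have hNy : ‖(fun i => (A (x + t • u) - b) i : Fin n → ℝ)‖ ≤ s + t * K := by
      have hsplit : (fun i => (A (x + t • u) - b) i : Fin n → ℝ)
          = (fun i => (A x - b) i : Fin n → ℝ) + (fun i => (t • A u) i : Fin n → ℝ) := by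
        funext i
        simp [map_add, map_smul]
        ring
      calc ‖(fun i => (A (x + t • u) - b) i : Fin n → ℝ)‖
          ≤ ‖(fun i => (A x - b) i : Fin n → ℝ)‖ + ‖(fun i => (t • A u) i : Fin n → ℝ)‖ := by
            rw [hsplit]; exact norm_add_le _ _
        _ ≤ s + t * K := by
            have h1 : ‖(fun i => (t • A u) i : Fin n → ℝ)‖ ≤ ‖t • A u‖ :=
              pi_norm_le_euclidean (t • A u)
            have h2 : ‖t • A u‖ = t * ‖A u‖ := by
              rw [norm_smul, Real.norm_eq_abs, abs_of_pos ht]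
            have := mul_le_mul_of_nonneg_left hAu ht.le
            rw [h2] at h1
            linarith
    have hfy : f (x + t • u) ≤ (s + t * K) ^ p := by
      rw [hf]
      exact Real.rpow_le_rpow (norm_nonneg _) hNy (by linarith)
    have hsub := hg (x + t • u)
    rw [hinner] at hsub
    -- convexity bound: (s+tK)^p ≤ s^p + p*(s+tK)^(p-1)*(t*K)
    have hw0 : 0 ≤ s + t * K := by positivity
    have hyoung := young_aux hp hs0 hw0
    have hkey := key (s + t * K) hw0
    -- combine: t * ‖g‖ ≤ (s+tK)^p - s^p ≤ t*K*p*(s+tK)^(p-1) ≤ t*(C + M₁*(s+tK)^p)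
    have hchain : t * ‖g‖ ≤ t * (C + M₁ * (s + t * K) ^ p) := by
      have e1 : t * ‖g‖ ≤ (s + t * K) ^ p - s ^ p := by
        rw [← hfx]; linarith
      have hWp : (s + t * K) ^ p = (s + t * K) ^ (p - 1) * (s + t * K) := by
        rcases eq_or_lt_of_le hw0 with h0 | h0
        · rw [← h0, Real.zero_rpow (by linarith : p ≠ 0),
            Real.zero_rpow (by linarith : p - 1 ≠ 0), zero_mul]
        · rw [← Real.rpow_add_one h0.ne' (p - 1)]
          congr 1; ring
      have e2 : (s + t * K) ^ p - s ^ p ≤ p * (s + t * K) ^ (p - 1) * (t * K) := by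
        rw [hWp] at hyoung ⊢
        nlinarith [hyoung]
      have e3 : p * (s + t * K) ^ (p - 1) * (t * K) ≤ t * (C + M₁ * (s + t * K) ^ p) := by
        nlinarith [hkey, ht.le, Real.rpow_nonneg hw0 (p - 1)]
      linarith
    exact le_of_mul_le_mul_left (by linarith [hchain]) ht
  -- take the limit t → 0⁺
  have cont : Filter.Tendsto (fun t : ℝ => C + M₁ * (s + t * K) ^ p)
      (nhdsWithin 0 (Set.Ioi 0)) (nhds (C + M₁ * s ^ p)) := by
    have h3 : Continuous (fun t : ℝ => C + M₁ * (s + t * K) ^ p) :=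
      continuous_const.add (continuous_const.mul
        ((Real.continuous_rpow_const (by linarith)).comp
          (continuous_const.add (continuous_id.mul continuous_const))))
    have := h3.continuousAt (x := (0:ℝ)) |>.tendsto
    simp only [zero_mul, add_zero] at this
    exact this.mono_left nhdsWithin_le_nhds
  have hlim : ‖g‖ ≤ C + M₁ * s ^ p := by
    refine ge_of_tendsto cont ?_
    filter_upwards [self_mem_nhdsWithin] with t ht
    exact step t ht
  rw [hfx]
  exact hlim
end

section
/- Let A be an n×d real matrix, b ∈ ℝ^n, and f(x) = exp(‖Ax - b‖_∞). Then f is (M₀, M₁)-generalized-Lipschitz with M₁ = ‖A‖_op and M₀ = M₁ f*, where f* = inf f, i.e., every subgradient g of f at x satisfies ‖g‖ ≤ M₀ + M₁(f(x) - f*). -/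
open Real
open scoped RealInnerProductSpace

private lemma coord_le_norm {n : ℕ} (v : EuclideanSpace ℝ (Fin n)) (i : Fin n) :
    |v i| ≤ ‖v‖ := by
  rw [EuclideanSpace.norm_eq, ← Real.sqrt_sq_eq_abs]
  apply Real.sqrt_le_sqrt
  have := Finset.single_le_sum (f := fun j => ‖v j‖ ^ 2) (fun j _ => sq_nonneg _)
    (Finset.mem_univ i)
  simpa [sq_abs] using this

theorem exp_infNorm_generalized_lipschitz {d n : ℕ}
    (A : EuclideanSpace ℝ (Fin d) →L[ℝ] EuclideanSpace ℝ (Fin n))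
    (b : EuclideanSpace ℝ (Fin n))
    (f : EuclideanSpace ℝ (Fin d) → ℝ)
    -- f(x) = exp ‖A x - b‖_∞, where ‖·‖_∞ is the sup-norm (the Pi-type norm on Fin n → ℝ)
    (hf : ∀ x, f x = Real.exp ‖(fun i => (A x - b) i : Fin n → ℝ)‖)
    (fstar : ℝ) (hfstar : fstar = ⨅ x, f x) :
    ∀ (x g : EuclideanSpace ℝ (Fin d)),
      (∀ y, f x + ⟪g, y - x⟫ ≤ f y) →
      ‖g‖ ≤ ‖A‖ * fstar + ‖A‖ * (f x - fstar) := by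
  intro x g hsub
  have hgoal : ‖A‖ * fstar + ‖A‖ * (f x - fstar) = ‖A‖ * f x := by ring
  rw [hgoal]
  have hfx_pos : 0 < f x := by rw [hf]; exact Real.exp_pos _
  have key : ∀ u : EuclideanSpace ℝ (Fin d), ⟪g, u⟫ ≤ ‖A‖ * f x * ‖u‖ := by
    intro u
    set C : ℝ := ‖A‖ * ‖u‖ with hC
    have hC0 : 0 ≤ C := mul_nonneg (norm_nonneg _) (norm_nonneg _)
    have step : ∀ t : ℝ, 0 < t → ⟪g, u⟫ ≤ f x * C * Real.exp (C * t) := by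
      intro t ht
      have h1 := hsub (x + t • u)
      have hinner : ⟪g, (x + t • u) - x⟫ = t * ⟪g, u⟫ := by
        have : (x + t • u) - x = t • u := by abel
        rw [this, real_inner_smul_right]
      rw [hinner] at h1
      -- bound f (x + t • u)
      have hNle : ‖(fun i => (A (x + t • u) - b) i : Fin n → ℝ)‖
          ≤ ‖(fun i => (A x - b) i : Fin n → ℝ)‖ + C * t := by
        have hbnd : 0 ≤ ‖(fun i => (A x - b) i : Fin n → ℝ)‖ + C * t :=
          add_nonneg (norm_nonneg _) (mul_nonneg hC0 ht.le)
        rw [pi_norm_le_iff_of_nonneg hbnd]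
        intro i
        have hmap : (A (x + t • u) - b) i = (A x - b) i + (A (t • u)) i := by
          simp [map_add]
          ring
        have h2 : |(A x - b) i| ≤ ‖(fun i => (A x - b) i : Fin n → ℝ)‖ := by
          have := norm_le_pi_norm (fun i => (A x - b) i : Fin n → ℝ) i
          simpa using this
        have h3 : |(A (t • u)) i| ≤ C * t := by
          refine le_trans (coord_le_norm _ i) ?_
          calc ‖A (t • u)‖ ≤ ‖A‖ * ‖t • u‖ := A.le_opNorm _
            _ = C * t := by rw [norm_smul, hC]; simp [abs_of_pos ht]; ring
        calc ‖(A (x + t • u) - b) i‖ = |(A x - b) i + (A (t • u)) i| := by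
              rw [Real.norm_eq_abs, hmap]
          _ ≤ |(A x - b) i| + |(A (t • u)) i| := abs_add_le _ _
          _ ≤ ‖(fun i => (A x - b) i : Fin n → ℝ)‖ + C * t := add_le_add h2 h3
      have hfy : f (x + t • u) ≤ f x * Real.exp (C * t) := by
        rw [hf, hf, ← Real.exp_add]
        exact Real.exp_le_exp.mpr hNle
      -- exp s - 1 ≤ s * exp s
      have hexp : Real.exp (C * t) - 1 ≤ (C * t) * Real.exp (C * t) := by
        have h := Real.add_one_le_exp (-(C * t))
        have hm : Real.exp (-(C * t)) * Real.exp (C * t) = 1 := by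
          rw [← Real.exp_add]; simp
        nlinarith [Real.exp_pos (C * t)]
      have ht1 : t * ⟪g, u⟫ ≤ f x * C * Real.exp (C * t) * t := by
        have : t * ⟪g, u⟫ ≤ f x * Real.exp (C * t) - f x := by linarith
        calc t * ⟪g, u⟫ ≤ f x * Real.exp (C * t) - f x := this
          _ = f x * (Real.exp (C * t) - 1) := by ring
          _ ≤ f x * ((C * t) * Real.exp (C * t)) := by
              exact mul_le_mul_of_nonneg_left hexp hfx_pos.le
          _ = f x * C * Real.exp (C * t) * t := by ring
      exact le_of_mul_le_mul_left (by linarith [ht1]) ht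
    -- take limit t → 0⁺
    have htend : Filter.Tendsto (fun t : ℝ => f x * C * Real.exp (C * t))
        (nhdsWithin 0 (Set.Ioi 0)) (nhds (f x * C)) := by
      have hc : Continuous fun t : ℝ => f x * C * Real.exp (C * t) :=
        continuous_const.mul ((continuous_const.mul continuous_id).rexp)
      have h0 : Filter.Tendsto (fun t : ℝ => f x * C * Real.exp (C * t))
          (nhdsWithin 0 (Set.Ioi 0)) (nhds (f x * C * Real.exp (C * 0))) :=
        (hc.tendsto 0).mono_left nhdsWithin_le_nhds
      simpa using h0
    have hlim : ⟪g, u⟫ ≤ f x * C := by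
      refine ge_of_tendsto htend ?_
      filter_upwards [self_mem_nhdsWithin] with t ht
      exact step t ht
    calc ⟪g, u⟫ ≤ f x * C := hlim
      _ = ‖A‖ * f x * ‖u‖ := by rw [hC]; ring
  have hg := key g
  rw [real_inner_self_eq_norm_sq] at hg
  by_cases hg0 : ‖g‖ = 0
  · rw [hg0]; positivity
  · have hgpos : 0 < ‖g‖ := lt_of_le_of_ne (norm_nonneg _) (Ne.symm hg0)
    nlinarith [hg]
end

section
/- Suppose f is (M₀, M₁)-generalized-Lipschitz with minimizer x* satisfying ‖x*‖ ≤ R, M₁ > 0. Define F = max over the ball Q_R = {x : ‖x‖ ≤ R} of (f(x) - f*). Then F ≤ (M₀/M₁)(exp(2 R M₁) - 1), and f is globally M-Lipschitz on Q_R with M = M₀ + M₁ F ≤ M₀ exp(2 R M₁). -/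
open Real

theorem global_lipschitz_on_ball {d : ℕ}
    (f : EuclideanSpace ℝ (Fin d) → ℝ) (xstar : EuclideanSpace ℝ (Fin d))
    (R M₀ M₁ F : ℝ)
    (hf : Continuous f) (hmin : ∀ y, f xstar ≤ f y) (hxs : ‖xstar‖ ≤ R)
    (hM₀ : 0 ≤ M₀) (hM₁ : 0 < M₁)
    (hlip : ∀ x x' : EuclideanSpace ℝ (Fin d),
      |f x' - f x| ≤ (M₀ / M₁ + (f x - f xstar)) * (Real.exp (M₁ * ‖x' - x‖) - 1))
    (hF : F = sSup ((fun x => f x - f xstar) '' Metric.closedBall 0 R)) :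
    F ≤ (M₀ / M₁) * (Real.exp (2 * R * M₁) - 1) ∧
    (∀ x ∈ Metric.closedBall (0 : EuclideanSpace ℝ (Fin d)) R,
      ∀ y ∈ Metric.closedBall (0 : EuclideanSpace ℝ (Fin d)) R,
        |f x - f y| ≤ (M₀ + M₁ * F) * ‖x - y‖) ∧
    M₀ + M₁ * F ≤ M₀ * Real.exp (2 * R * M₁) := by
  have hR : (0:ℝ) ≤ R := le_trans (norm_nonneg _) hxs
  have hxsmem : xstar ∈ Metric.closedBall (0 : EuclideanSpace ℝ (Fin d)) R := by
    simpa [Metric.mem_closedBall, dist_eq_norm] using hxs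
  set S := (fun x => f x - f xstar) '' Metric.closedBall (0 : EuclideanSpace ℝ (Fin d)) R with hS
  have hSne : S.Nonempty := ⟨f xstar - f xstar, xstar, hxsmem, rfl⟩
  set B := (M₀ / M₁) * (Real.exp (2 * R * M₁) - 1) with hB
  have hub : ∀ v ∈ S, v ≤ B := by
    rintro v ⟨x, hx, rfl⟩
    have h1 := hlip xstar x
    have h2 : f x - f xstar ≤ |f x - f xstar| := le_abs_self _
    have hxx : ‖x - xstar‖ ≤ 2 * R := by
      have hx' : ‖x‖ ≤ R := by simpa [Metric.mem_closedBall, dist_eq_norm] using hx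
      calc ‖x - xstar‖ ≤ ‖x‖ + ‖xstar‖ := norm_sub_le _ _
        _ ≤ 2 * R := by linarith
    have hexp : Real.exp (M₁ * ‖x - xstar‖) - 1 ≤ Real.exp (2 * R * M₁) - 1 := by
      have : M₁ * ‖x - xstar‖ ≤ 2 * R * M₁ := by nlinarith
      have := Real.exp_le_exp.mpr this
      linarith
    have hC : (0:ℝ) ≤ M₀ / M₁ := div_nonneg hM₀ hM₁.le
    calc f x - f xstar ≤ (M₀ / M₁ + (f xstar - f xstar)) * (Real.exp (M₁ * ‖x - xstar‖) - 1) :=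
          le_trans h2 h1
      _ = (M₀ / M₁) * (Real.exp (M₁ * ‖x - xstar‖) - 1) := by ring
      _ ≤ B := by
          apply mul_le_mul_of_nonneg_left hexp hC
  have hbdd : BddAbove S := ⟨B, hub⟩
  have hFB : F ≤ B := by rw [hF]; exact csSup_le hSne hub
  have hF0 : (0:ℝ) ≤ F := by
    rw [hF]
    have : f xstar - f xstar ∈ S := ⟨xstar, hxsmem, rfl⟩
    have := le_csSup hbdd this
    simpa using this
  have hFmem : ∀ x ∈ Metric.closedBall (0 : EuclideanSpace ℝ (Fin d)) R, f x - f xstar ≤ F := by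
    intro x hx
    rw [hF]
    exact le_csSup hbdd ⟨x, hx, rfl⟩
  set C := M₀ / M₁ + F with hCdef
  have hC0 : 0 ≤ C := add_nonneg (div_nonneg hM₀ hM₁.le) hF0
  refine ⟨hFB, ?_, ?_⟩
  · intro x hx y hy
    set a := M₁ * ‖x - y‖ with ha
    have ha0 : 0 ≤ a := mul_nonneg hM₁.le (norm_nonneg _)
    -- step bound for each n ≥ 1
    have step : ∀ n : ℕ, 1 ≤ n → |f x - f y| ≤ C * (a * Real.exp (a / n)) := by
      intro n hn
      have hn0 : (0:ℝ) < n := by exact_mod_cast hn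
      set z : ℕ → EuclideanSpace ℝ (Fin d) := fun i => x + ((i:ℝ)/n) • (y - x) with hz
      have hz0 : z 0 = x := by simp [hz]
      have hzn : z n = y := by
        simp only [hz]
        rw [div_self hn0.ne']
        simp
      have hzmem : ∀ i : ℕ, i ≤ n → z i ∈ Metric.closedBall (0 : EuclideanSpace ℝ (Fin d)) R := by
        intro i hi
        have ht0 : (0:ℝ) ≤ (i:ℝ)/n := by positivity
        have ht1 : (i:ℝ)/n ≤ 1 := by
          rw [div_le_one hn0]; exact_mod_cast hi
        have : z i = (1 - (i:ℝ)/n) • x + ((i:ℝ)/n) • y := by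
          simp only [hz]
          module
        rw [this]
        exact (convex_closedBall (0 : EuclideanSpace ℝ (Fin d)) R) hx hy (by linarith) ht0 (by ring)
      have hdiff : ∀ i : ℕ, ‖z (i+1) - z i‖ = ‖x - y‖ / n := by
        intro i
        have : z (i+1) - z i = ((1:ℝ)/n) • (y - x) := by
          simp only [hz]
          push_cast
          module
        rw [this, norm_smul]
        rw [norm_sub_rev y x]
        simp [abs_of_nonneg (by positivity : (0:ℝ) ≤ 1/(n:ℝ))]
        ring
      have hstep : ∀ i : ℕ, i < n →
          |f (z (i+1)) - f (z i)| ≤ C * (Real.exp (a / n) - 1) := by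
        intro i hi
        have h1 := hlip (z i) (z (i+1))
        have hfz : f (z i) - f xstar ≤ F := hFmem _ (hzmem i hi.le)
        have harg : M₁ * ‖z (i+1) - z i‖ = a / n := by
          rw [hdiff i, ha]; ring
        rw [harg] at h1
        have hexp0 : 0 ≤ Real.exp (a / n) - 1 := by
          have : (0:ℝ) ≤ a / n := by positivity
          have := Real.one_le_exp this
          linarith
        calc |f (z (i+1)) - f (z i)| ≤ (M₀ / M₁ + (f (z i) - f xstar)) * (Real.exp (a / n) - 1) := h1
          _ ≤ C * (Real.exp (a / n) - 1) := by
              apply mul_le_mul_of_nonneg_right _ hexp0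
              rw [hCdef]; linarith
      have htele : f y - f x = ∑ i ∈ Finset.range n, (f (z (i+1)) - f (z i)) := by
        rw [Finset.sum_range_sub (fun i => f (z i)), hz0, hzn]
      have hsum : |f x - f y| ≤ (n:ℝ) * (C * (Real.exp (a / n) - 1)) := by
        rw [abs_sub_comm, htele]
        calc |∑ i ∈ Finset.range n, (f (z (i+1)) - f (z i))|
            ≤ ∑ i ∈ Finset.range n, |f (z (i+1)) - f (z i)| := Finset.abs_sum_le_sum_abs _ _
          _ ≤ ∑ i ∈ Finset.range n, C * (Real.exp (a / n) - 1) := by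
              apply Finset.sum_le_sum
              intro i hi
              exact hstep i (Finset.mem_range.mp hi)
          _ = (n:ℝ) * (C * (Real.exp (a / n) - 1)) := by
              rw [Finset.sum_const, Finset.card_range]; simp
      -- exp t - 1 ≤ t exp t
      have hexpbd : Real.exp (a / n) - 1 ≤ (a / n) * Real.exp (a / n) := by
        have h := Real.add_one_le_exp (-(a/(n:ℝ)))
        rw [Real.exp_neg] at h
        have hpos := Real.exp_pos (a/(n:ℝ))
        have h2 : (-(a/(n:ℝ)) + 1) * Real.exp (a/(n:ℝ)) ≤ 1 := by
          have := mul_le_mul_of_nonneg_right h hpos.le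
          rwa [inv_mul_cancel₀ hpos.ne'] at this
        nlinarith
      calc |f x - f y| ≤ (n:ℝ) * (C * (Real.exp (a / n) - 1)) := hsum
        _ ≤ (n:ℝ) * (C * ((a / n) * Real.exp (a / n))) := by
            apply mul_le_mul_of_nonneg_left _ hn0.le
            exact mul_le_mul_of_nonneg_left hexpbd hC0
        _ = C * (a * Real.exp (a / n)) := by field_simp
    -- limit
    have htend : Filter.Tendsto (fun n : ℕ => C * (a * Real.exp (a / n))) Filter.atTop
        (nhds (C * (a * Real.exp 0))) := by
      apply Filter.Tendsto.const_mul
      apply Filter.Tendsto.const_mul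
      exact (Real.continuous_exp.tendsto 0).comp (tendsto_const_div_atTop_nhds_zero_nat a)
    have hlim : |f x - f y| ≤ C * (a * Real.exp 0) := by
      apply ge_of_tendsto htend
      filter_upwards [Filter.eventually_ge_atTop 1] with n hn
      exact step n hn
    have : C * (a * Real.exp 0) = (M₀ + M₁ * F) * ‖x - y‖ := by
      rw [Real.exp_zero, hCdef, ha]
      field_simp
    linarith [hlim, this.ge]
  · have : M₁ * F ≤ M₀ * (Real.exp (2 * R * M₁) - 1) := by
      have := mul_le_mul_of_nonneg_left hFB hM₁.le
      rw [hB] at this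
      calc M₁ * F ≤ M₁ * ((M₀ / M₁) * (Real.exp (2 * R * M₁) - 1)) := this
        _ = M₀ * (Real.exp (2 * R * M₁) - 1) := by field_simp
    linarith
end

section
/- Let f : ℝ^d → ℝ be convex with minimizer x* ∈ Q_R and subgradient bound ‖∇f(x)‖ ≤ M₀ + M₁(f(x) - f*). Consider projected normalized subgradient descent x_{k+1} = proj_{Q_R}(x_k - η_k ∇f(x_k)), x₀ = 0, with η_k = R/(‖∇f(x_k)‖ √(K+1)). If K = 4⌈(R M₁)² + (R M₀/ε)²⌉ then min_{0 ≤ k ≤ K} (f(x_k) - f*) ≤ ε. -/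
open Real
open scoped RealInnerProductSpace

/-- Euclidean projection onto the closed ball of radius `R` centered at the origin. -/
noncomputable def projR {d : ℕ} (R : ℝ) (y : EuclideanSpace ℝ (Fin d)) :
    EuclideanSpace ℝ (Fin d) :=
  (min 1 (R / ‖y‖)) • y

lemma projR_nonexpansive {d : ℕ} {R : ℝ} (hR : 0 < R)
    (y z : EuclideanSpace ℝ (Fin d)) (hz : ‖z‖ ≤ R) :
    ‖projR R y - z‖ ≤ ‖y - z‖ := by
  rcases eq_or_ne y 0 with rfl | hy
  · simp [projR]
  have hy0 : 0 < ‖y‖ := norm_pos_iff.2 hy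
  set t : ℝ := min 1 (R / ‖y‖) with ht
  have ht0 : 0 ≤ t := le_min zero_le_one (by positivity)
  have ht1 : t ≤ 1 := min_le_left _ _
  have heq : (1 - t) * (t * ‖y‖ - R) = 0 := by
    rcases le_or_gt ‖y‖ R with h | h
    · have : (1:ℝ) ≤ R / ‖y‖ := (one_le_div hy0).2 h
      have : t = 1 := min_eq_left this
      rw [this]; ring
    · have hlt : R / ‖y‖ < 1 := (div_lt_one hy0).2 h
      have : t = R / ‖y‖ := min_eq_right hlt.le
      rw [this, div_mul_cancel₀ _ hy0.ne']; ring
  have hinner : ⟪y, z⟫ ≤ ‖y‖ * ‖z‖ := real_inner_le_norm y z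
  have hsq : ‖t • y - z‖ ^ 2 ≤ ‖y - z‖ ^ 2 := by
    rw [norm_sub_sq_real, norm_sub_sq_real, real_inner_smul_left, norm_smul,
      Real.norm_eq_abs, abs_of_nonneg ht0]
    nlinarith [mul_nonneg (sub_nonneg.2 ht1) (mul_nonneg hy0.le (sub_nonneg.2 hz)),
      mul_nonneg (sub_nonneg.2 ht1) (sub_nonneg.2 hinner),
      mul_nonneg (mul_nonneg (sub_nonneg.2 ht1) (sub_nonneg.2 ht1)) (sq_nonneg ‖y‖),
      heq, hy0]
  have h1 : ‖projR R y - z‖ = ‖t • y - z‖ := by rw [projR]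
  rw [h1]
  nlinarith [norm_nonneg (t • y - z), norm_nonneg (y - z), hsq]

set_option maxHeartbeats 1000000 in
theorem projected_normalized_subgradient_descent {d : ℕ}
    (f : EuclideanSpace ℝ (Fin d) → ℝ)
    (g : EuclideanSpace ℝ (Fin d) → EuclideanSpace ℝ (Fin d))
    (xstar : EuclideanSpace ℝ (Fin d)) (R M₀ M₁ ε : ℝ) (K : ℕ)
    (x : ℕ → EuclideanSpace ℝ (Fin d))
    (hconv : ConvexOn ℝ Set.univ f)
    (hmin : ∀ y, f xstar ≤ f y) (hxs : ‖xstar‖ ≤ R) (hR : 0 < R)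
    (hM₀ : 0 ≤ M₀) (hM₁ : 0 ≤ M₁) (hε : 0 < ε)
    (hsub : ∀ z y, f z + ⟪g z, y - z⟫ ≤ f y)
    (hgb : ∀ z, ‖g z‖ ≤ M₀ + M₁ * (f z - f xstar))
    (hK : K = 4 * Nat.ceil ((R * M₁) ^ 2 + (R * M₀ / ε) ^ 2))
    (hx0 : x 0 = 0)
    (hit : ∀ k, x (k + 1) =
      projR R (x k - (R / (‖g (x k)‖ * Real.sqrt (K + 1))) • g (x k))) :
    ∃ k ≤ K, f (x k) - f xstar ≤ ε := by
  by_contra hcon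
  push_neg at hcon
  have hK1 : (0:ℝ) < (K:ℝ) + 1 := by positivity
  set S := Real.sqrt ((K:ℝ) + 1) with hSdef
  have hSpos : 0 < S := Real.sqrt_pos.2 hK1
  have hS2 : S ^ 2 = (K:ℝ) + 1 := Real.sq_sqrt hK1.le
  -- nonzero subgradients
  have hg : ∀ k, k ≤ K → 0 < ‖g (x k)‖ := by
    intro k hk
    rcases eq_or_ne (g (x k)) 0 with h0 | h0
    · exfalso
      have h1 := hsub (x k) xstar
      rw [h0] at h1
      simp at h1
      have h2 := hcon k hk
      linarith
    · exact norm_pos_iff.2 h0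
  have hMε : 0 < M₀ + M₁ * ε := by
    by_contra hle
    push_neg at hle
    have hM0 : M₀ = 0 := by nlinarith
    have hM1 : M₁ = 0 := by nlinarith
    have h1 := hgb (x 0)
    rw [hM0, hM1] at h1
    simp at h1
    have h2 := hg 0 (Nat.zero_le K)
    rw [h1] at h2
    simp at h2
  have hinner : ∀ k, (f (x k) - f xstar) ≤ ⟪g (x k), x k - xstar⟫ := by
    intro k
    have h1 := hsub (x k) xstar
    rw [show xstar - x k = -(x k - xstar) from (neg_sub _ _).symm, inner_neg_right] at h1
    linarith
  set c : ℝ := 2 * R * ε / ((M₀ + M₁ * ε) * S) with hcdef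
  -- per-step inequality
  have hstep : ∀ k, k ≤ K →
      ‖x (k + 1) - xstar‖ ^ 2 ≤ ‖x k - xstar‖ ^ 2 - c + R ^ 2 / ((K:ℝ) + 1) := by
    intro k hk
    have hGpos : 0 < ‖g (x k)‖ := hg k hk
    set G := ‖g (x k)‖ with hGdef
    set η : ℝ := R / (G * S) with hη
    have hηpos : 0 < η := by positivity
    have hne : ‖x (k + 1) - xstar‖ ≤ ‖(x k - η • g (x k)) - xstar‖ := by
      rw [hit k]
      exact projR_nonexpansive hR _ _ hxs
    have hsq : ‖x (k + 1) - xstar‖ ^ 2 ≤ ‖(x k - η • g (x k)) - xstar‖ ^ 2 := by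
      nlinarith [norm_nonneg (x (k + 1) - xstar), norm_nonneg ((x k - η • g (x k)) - xstar)]
    have hexp : ‖(x k - η • g (x k)) - xstar‖ ^ 2
        = ‖x k - xstar‖ ^ 2 - 2 * η * ⟪g (x k), x k - xstar⟫ + η ^ 2 * G ^ 2 := by
      rw [show (x k - η • g (x k)) - xstar = (x k - xstar) - η • g (x k) from sub_right_comm _ _ _,
        norm_sub_sq_real, real_inner_smul_right, norm_smul, Real.norm_eq_abs,
        abs_of_pos hηpos, real_inner_comm]
      ring
    have hη2 : η ^ 2 * G ^ 2 = R ^ 2 / ((K:ℝ) + 1) := by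
      have h1 : η ^ 2 * G ^ 2 = (η * G) ^ 2 := by ring
      have h2 : η * G = R / S := by
        rw [hη]; field_simp
      rw [h1, h2, div_pow, hS2]
    have hk1 := hcon k hk
    have hgbk := hgb (x k)
    rw [← hGdef] at hgbk
    clear_value G η
    have hc : c ≤ 2 * η * (f (x k) - f xstar) := by
      have h3 : 2 * η * (f (x k) - f xstar) = 2 * R * (f (x k) - f xstar) / (G * S) := by
        rw [hη]; ring
      rw [h3, hcdef, div_le_div_iff₀ (by positivity) (by positivity)]
      have key : ε * G ≤ (f (x k) - f xstar) * (M₀ + M₁ * ε) := by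
        nlinarith [mul_le_mul_of_nonneg_left hgbk hε.le,
          mul_nonneg (show (0:ℝ) ≤ f (x k) - f xstar - ε by linarith) hM₀]
      nlinarith [mul_le_mul_of_nonneg_left key (show (0:ℝ) ≤ 2 * R * S by positivity)]
    have h4 : 2 * η * (f (x k) - f xstar) ≤ 2 * η * ⟪g (x k), x k - xstar⟫ :=
      mul_le_mul_of_nonneg_left (hinner k) (by positivity)
    calc ‖x (k + 1) - xstar‖ ^ 2 ≤ ‖(x k - η • g (x k)) - xstar‖ ^ 2 := hsq
      _ = ‖x k - xstar‖ ^ 2 - 2 * η * ⟪g (x k), x k - xstar⟫ + η ^ 2 * G ^ 2 := hexp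
      _ ≤ ‖x k - xstar‖ ^ 2 - c + R ^ 2 / ((K:ℝ) + 1) := by
          rw [hη2]; linarith
  -- telescoping sum
  have hsum : ∀ n, n ≤ K + 1 →
      (n:ℝ) * c ≤ ‖x 0 - xstar‖ ^ 2 - ‖x n - xstar‖ ^ 2 + (n:ℝ) * (R ^ 2 / ((K:ℝ) + 1)) := by
    intro n
    induction n with
    | zero => intro _; simp
    | succ m ih =>
      intro hm
      have hmK : m ≤ K := Nat.succ_le_succ_iff.mp hm
      have h1 := ih (Nat.le_succ_of_le hmK)
      have h2 := hstep m hmK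
      push_cast
      push_cast at h1
      linarith
  have hfin := hsum (K + 1) le_rfl
  have h0 : ‖x 0 - xstar‖ ^ 2 ≤ R ^ 2 := by
    rw [hx0, zero_sub, norm_neg]
    nlinarith [norm_nonneg xstar]
  have hKR : ((K:ℝ) + 1) * (R ^ 2 / ((K:ℝ) + 1)) = R ^ 2 := by field_simp
  have hsum2 : ((K:ℝ) + 1) * c ≤ 2 * R ^ 2 := by
    push_cast at hfin
    nlinarith [sq_nonneg ‖x (K + 1) - xstar‖]
  -- derive S * ε ≤ R * (M₀ + M₁ * ε)
  have hSε : S * ε ≤ R * (M₀ + M₁ * ε) := by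
    rw [hcdef, ← hS2] at hsum2
    have h5 : S ^ 2 * (2 * R * ε / ((M₀ + M₁ * ε) * S)) = 2 * R * ε * S / (M₀ + M₁ * ε) := by
      field_simp
    rw [h5, div_le_iff₀ hMε] at hsum2
    nlinarith
  -- final contradiction
  have hSb : S ≤ R * M₀ / ε + R * M₁ := by
    rw [div_add' _ _ _ hε.ne']
    rw [le_div_iff₀ hε]
    nlinarith
  have hceil : ((R * M₁) ^ 2 + (R * M₀ / ε) ^ 2 : ℝ)
      ≤ ((Nat.ceil ((R * M₁) ^ 2 + (R * M₀ / ε) ^ 2) : ℕ) : ℝ) := Nat.le_ceil _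
  have hKb : 4 * ((R * M₁) ^ 2 + (R * M₀ / ε) ^ 2) ≤ (K:ℝ) := by
    rw [hK]; push_cast; linarith
  nlinarith [hS2, mul_self_le_mul_self hSpos.le hSb, sq_nonneg (R * M₁ - R * M₀ / ε)]
end

section
/- Under the same setting with Polyak stepsizes η_k = (f(x_k) - f*)/‖∇f(x_k)‖², each step satisfies ½‖x_{k+1} - x*‖² ≤ ½‖x_k - x*‖² - min{(f(x_k) - f*)²/(8 M₀²), 1/(8 M₁²)}, and consequently with K = 4⌈(R M₁)² + (R M₀/ε)²⌉ one has min_{0 ≤ k ≤ K} (f(x_k) - f*) ≤ ε. -/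
open Real
open scoped RealInnerProductSpace

lemma projR_nonexp {d : ℕ} {R : ℝ} (hR : 0 < R) {xs : EuclideanSpace ℝ (Fin d)}
    (hxs : ‖xs‖ ≤ R) (y : EuclideanSpace ℝ (Fin d)) :
    ‖projR R y - xs‖ ≤ ‖y - xs‖ := by
  by_cases hy : ‖y‖ ≤ R
  · have h : projR R y = y := by
      rcases eq_or_ne y 0 with h0 | h0
      · simp [projR, h0]
      · have hny : 0 < ‖y‖ := norm_pos_iff.mpr h0
        have h1 : (1:ℝ) ≤ R / ‖y‖ := (one_le_div hny).mpr hy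
        simp [projR, min_eq_left h1]
    rw [h]
  · push_neg at hy
    have hny : 0 < ‖y‖ := lt_trans hR hy
    have ht0 : 0 < R / ‖y‖ := div_pos hR hny
    have ht1 : R / ‖y‖ < 1 := (div_lt_one hny).mpr hy
    have hproj : projR R y = (R / ‖y‖) • y := by rw [projR, min_eq_right ht1.le]
    set t : ℝ := R / ‖y‖ with ht
    have htR : t * ‖y‖ = R := div_mul_cancel₀ _ hny.ne'
    have hI : ⟪y, xs⟫ ≤ t * ‖y‖^2 := by
      have := real_inner_le_norm y xs
      nlinarith [norm_nonneg y]
    have hsq : ‖t • y - xs‖ ^ 2 ≤ ‖y - xs‖ ^ 2 := by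
      rw [norm_sub_sq_real, norm_sub_sq_real, norm_smul, real_inner_smul_left,
        Real.norm_eq_abs, abs_of_pos ht0]
      nlinarith [norm_nonneg y]
    rw [hproj]
    have := Real.sqrt_le_sqrt hsq
    rwa [Real.sqrt_sq (norm_nonneg _), Real.sqrt_sq (norm_nonneg _)] at this

lemma min_le_aux {δ G M₀ M₁ : ℝ} (hδ : 0 ≤ δ) (hM₀ : 0 ≤ M₀) (hM₁ : 0 ≤ M₁)
    (hGb : G ≤ M₀ + M₁ * δ) (hG0 : 0 ≤ G) (hzero : G = 0 → δ = 0) :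
    min (δ^2 / (8 * M₀^2)) (1 / (8 * M₁^2)) ≤ δ^2 / (2 * G^2) := by
  rcases eq_or_lt_of_le hG0 with hG | hG
  · have hd : δ = 0 := hzero hG.symm
    simp [hd, ← hG]
  · rcases eq_or_lt_of_le hM₀ with h0 | h0
    · refine le_trans (min_le_left _ _) ?_
      rw [← h0]
      simp
      positivity
    rcases eq_or_lt_of_le hM₁ with h1 | h1
    · refine le_trans (min_le_right _ _) ?_
      rw [← h1]
      simp
      positivity
    rcases eq_or_lt_of_le hδ with hd | hd
    · refine le_trans (min_le_left _ _) ?_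
      rw [← hd]
      simp
    rcases le_total (M₁ * δ) M₀ with hc | hc
    · refine le_trans (min_le_left _ _) ?_
      apply div_le_div_of_nonneg_left (by positivity) (by positivity)
      nlinarith
    · refine le_trans (min_le_right _ _) ?_
      rw [div_le_div_iff₀ (by positivity) (by positivity)]
      nlinarith

lemma step_ineq {d : ℕ} {R : ℝ} (hR : 0 < R) {xs z : EuclideanSpace ℝ (Fin d)}
    (hxs : ‖xs‖ ≤ R) {δ : ℝ} (hδ : 0 ≤ δ) {G : EuclideanSpace ℝ (Fin d)}
    (hkey : δ ≤ ⟪G, z - xs⟫) (hzero : G = 0 → δ = 0) :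
    ‖projR R (z - (δ / ‖G‖^2) • G) - xs‖^2 ≤ ‖z - xs‖^2 - δ^2 / ‖G‖^2 := by
  have hne := projR_nonexp hR hxs (z - (δ / ‖G‖^2) • G)
  have hsq : ‖projR R (z - (δ / ‖G‖^2) • G) - xs‖^2 ≤ ‖z - (δ / ‖G‖^2) • G - xs‖^2 :=
    pow_le_pow_left₀ (norm_nonneg _) hne 2
  rcases eq_or_ne G 0 with hG | hG
  · have hd : δ = 0 := hzero hG
    simpa [hG, hd] using hsq
  · have hGn : (0:ℝ) < ‖G‖^2 := pow_pos (norm_pos_iff.mpr hG) 2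
    set η : ℝ := δ / ‖G‖^2 with hη
    have hexp : ‖z - η • G - xs‖^2
        = ‖z - xs‖^2 - 2 * (η * ⟪z - xs, G⟫) + η^2 * ‖G‖^2 := by
      have : z - η • G - xs = (z - xs) - η • G := by abel
      rw [this, norm_sub_sq_real, real_inner_smul_right, norm_smul,
        Real.norm_eq_abs, mul_pow, sq_abs]
    have hη0 : 0 ≤ η := div_nonneg hδ hGn.le
    have hcomm : ⟪z - xs, G⟫ = ⟪G, z - xs⟫ := real_inner_comm _ _
    have h2 : η * δ ≤ η * ⟪z - xs, G⟫ := by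
      rw [hcomm]; exact mul_le_mul_of_nonneg_left hkey hη0
    have h3 : η * ‖G‖^2 = δ := div_mul_cancel₀ _ hGn.ne'
    have h4 : η^2 * ‖G‖^2 = η * δ := by rw [pow_two, mul_assoc, h3]
    have h5 : η * δ = δ^2 / ‖G‖^2 := by
      rw [hη]; field_simp
    calc ‖projR R (z - η • G) - xs‖^2 ≤ ‖z - η • G - xs‖^2 := hsq
      _ = ‖z - xs‖^2 - 2 * (η * ⟪z - xs, G⟫) + η^2 * ‖G‖^2 := hexp
      _ ≤ ‖z - xs‖^2 - 2 * (η * δ) + η * δ := by nlinarith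
      _ = ‖z - xs‖^2 - δ^2 / ‖G‖^2 := by rw [h5]; ring

lemma final_aux {R M₀ M₁ ε c Kr N : ℝ} (hR : 0 < R) (hM₀ : 0 ≤ M₀) (hM₁ : 0 ≤ M₁)
    (hε : 0 < ε) (hA : 0 < M₀ + M₁ * ε) (hc : c = ε^2 / (2 * (M₀ + M₁ * ε)^2))
    (hS : 4 * ((R * M₁)^2 + (R * M₀ / ε)^2) ≤ Kr) (hN : 0 ≤ N)
    (hfin : (Kr + 1) * (2 * c) + N ≤ R^2) : False := by
  have hcpos : 0 < c := by rw [hc]; positivity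
  have h4 : 2 * c = ε^2 / (M₀ + M₁ * ε)^2 := by rw [hc]; field_simp
  have key : 2 * R^2 * (M₀ + M₁ * ε)^2 ≤ 4 * ((R * M₁)^2 + (R * M₀ / ε)^2) * ε^2 := by
    have hrw : 4 * ((R * M₁)^2 + (R * M₀ / ε)^2) * ε^2
        = 4 * (R * M₁ * ε)^2 + 4 * (R * M₀)^2 := by
      field_simp
    rw [hrw]
    nlinarith [sq_nonneg (R * (M₀ - M₁ * ε))]
  have hKc : 2 * R^2 ≤ Kr * (2 * c) := by
    have ha : 4 * ((R * M₁)^2 + (R * M₀ / ε)^2) * (2 * c) ≤ Kr * (2 * c) :=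
      mul_le_mul_of_nonneg_right hS (by linarith)
    refine le_trans ?_ ha
    rw [h4, mul_div_assoc', le_div_iff₀ (by positivity)]
    exact key
  nlinarith

lemma dec_aux {ε δ G M₀ M₁ : ℝ} (hε : 0 < ε) (hδε : ε < δ) (hG : 0 < G)
    (hM₀ : 0 ≤ M₀) (hA : 0 < M₀ + M₁ * ε) (hGb : G ≤ M₀ + M₁ * δ) :
    ε^2 / (M₀ + M₁ * ε)^2 ≤ δ^2 / G^2 := by
  have h1 : ε * G ≤ δ * (M₀ + M₁ * ε) := by nlinarith
  have h2 : (ε * G)^2 ≤ (δ * (M₀ + M₁ * ε))^2 :=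
    pow_le_pow_left₀ (by positivity) h1 2
  rw [div_le_div_iff₀ (pow_pos hA 2) (by positivity)]
  nlinarith

theorem projected_polyak_subgradient_descent {d : ℕ}
    (f : EuclideanSpace ℝ (Fin d) → ℝ)
    (g : EuclideanSpace ℝ (Fin d) → EuclideanSpace ℝ (Fin d))
    (xstar : EuclideanSpace ℝ (Fin d)) (R M₀ M₁ ε : ℝ) (K : ℕ)
    (x : ℕ → EuclideanSpace ℝ (Fin d))
    (hconv : ConvexOn ℝ Set.univ f)
    (hmin : ∀ y, f xstar ≤ f y) (hxs : ‖xstar‖ ≤ R) (hR : 0 < R)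
    (hM₀ : 0 ≤ M₀) (hM₁ : 0 ≤ M₁) (hε : 0 < ε)
    (hsub : ∀ z y, f z + ⟪g z, y - z⟫ ≤ f y)
    (hgb : ∀ z, ‖g z‖ ≤ M₀ + M₁ * (f z - f xstar))
    (hx0 : x 0 = 0)
    (hit : ∀ k, x (k + 1) =
      projR R (x k - ((f (x k) - f xstar) / ‖g (x k)‖ ^ 2) • g (x k))) :
    (∀ k, (1 / 2 : ℝ) * ‖x (k + 1) - xstar‖ ^ 2 ≤
        1 / 2 * ‖x k - xstar‖ ^ 2 -
          min ((f (x k) - f xstar) ^ 2 / (8 * M₀ ^ 2)) (1 / (8 * M₁ ^ 2))) ∧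
    (K = 4 * Nat.ceil ((R * M₁) ^ 2 + (R * M₀ / ε) ^ 2) →
      ∃ k ≤ K, f (x k) - f xstar ≤ ε) := by
  have hδ0 : ∀ z, 0 ≤ f z - f xstar := fun z => sub_nonneg.mpr (hmin z)
  have hkey : ∀ z, f z - f xstar ≤ ⟪g z, z - xstar⟫ := by
    intro z
    have h := hsub z xstar
    have h2 : ⟪g z, xstar - z⟫ = -⟪g z, z - xstar⟫ := by
      rw [← inner_neg_right, neg_sub]
    rw [h2] at h
    linarith
  have gzero : ∀ z, g z = 0 → f z - f xstar = 0 := by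
    intro z hz
    have h := hsub z xstar
    rw [hz] at h
    simp only [inner_zero_left, add_zero] at h
    linarith [hmin z]
  have step : ∀ k, ‖x (k + 1) - xstar‖^2 ≤
      ‖x k - xstar‖^2 - (f (x k) - f xstar)^2 / ‖g (x k)‖^2 := by
    intro k
    rw [hit k]
    exact step_ineq hR hxs (hδ0 _) (hkey _) (fun h => gzero _ h)
  have gnormzero : ∀ z, ‖g z‖ = 0 → f z - f xstar = 0 := fun z h =>
    gzero z (norm_eq_zero.mp h)
  constructor
  · intro k
    have hs := step k
    have hm := min_le_aux (hδ0 (x k)) hM₀ hM₁ (hgb (x k)) (norm_nonneg _)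
      (gnormzero (x k))
    have he : (f (x k) - f xstar)^2 / (2 * ‖g (x k)‖^2)
        = (f (x k) - f xstar)^2 / ‖g (x k)‖^2 / 2 := by
      rw [div_div, mul_comm]
    rw [he] at hm
    linarith
  · intro hK
    by_contra hcon
    push_neg at hcon
    by_cases hMM : M₀ = 0 ∧ M₁ = 0
    · obtain ⟨h0, h1⟩ := hMM
      have hg0 : ‖g (x 0)‖ ≤ 0 := by simpa [h0, h1] using hgb (x 0)
      have := gnormzero (x 0) (le_antisymm hg0 (norm_nonneg _))
      have := hcon 0 (Nat.zero_le K)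
      linarith
    · have hA : (0:ℝ) < M₀ + M₁ * ε := by
        rcases eq_or_lt_of_le hM₀ with h0 | h0
        · have h1 : 0 < M₁ := hM₁.lt_of_ne (fun e => hMM ⟨h0.symm, e.symm⟩)
          nlinarith
        · nlinarith
      obtain ⟨c, hcdef⟩ : ∃ c : ℝ, c = ε^2 / (2 * (M₀ + M₁ * ε)^2) := ⟨_, rfl⟩
      have h2c : 2 * c = ε^2 / (M₀ + M₁ * ε)^2 := by rw [hcdef]; field_simp
      have hdec : ∀ k, k ≤ K → ‖x (k+1) - xstar‖^2 ≤ ‖x k - xstar‖^2 - 2 * c := by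
        intro k hk
        have hs := step k
        have hδε : ε < f (x k) - f xstar := hcon k hk
        have hGpos : 0 < ‖g (x k)‖ := by
          rcases eq_or_lt_of_le (norm_nonneg (g (x k))) with h | h
          · have := gnormzero (x k) h.symm
            linarith
          · exact h
        have h3 := dec_aux hε hδε hGpos hM₀ hA (hgb (x k))
        rw [← h2c] at h3
        linarith
      have H : ∀ k, k ≤ K + 1 → (k : ℝ) * (2 * c) + ‖x k - xstar‖^2 ≤ R^2 := by
        intro k
        induction k with
        | zero =>
          intro _
          simp only [hx0, Nat.cast_zero, zero_mul, zero_add, zero_sub, norm_neg]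
          exact pow_le_pow_left₀ (norm_nonneg _) hxs 2
        | succ n ih =>
          intro hn
          have hn' : n ≤ K := Nat.succ_le_succ_iff.mp hn
          have h1 := hdec n hn'
          have h2 := ih (le_trans hn' (Nat.le_succ K))
          push_cast
          linarith
      have hfin := H (K + 1) le_rfl
      have hnn : 0 ≤ ‖x (K+1) - xstar‖^2 := sq_nonneg _
      have hS : 4 * ((R * M₁)^2 + (R * M₀ / ε)^2) ≤ (K : ℝ) := by
        rw [hK]
        push_cast
        have := Nat.le_ceil ((R * M₁)^2 + (R * M₀ / ε)^2)
        linarith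
      have hcast : ((K + 1 : ℕ) : ℝ) = (K : ℝ) + 1 := by push_cast; ring
      rw [hcast] at hfin
      exact final_aux hR hM₀ hM₁ hε hA hcdef hS hnn (by linarith)
end

section
/- Let f : ℝ → ℝ be given by the piecewise construction f(x) = (G₀/G₁)(exp(G₁|x - 3R/4|) - 1) for x ≥ R/2 and its affine extension for x < R/2. Then f is convex, its subgradients satisfy |f'(x)| ≤ G₀ + G₁(f(x) - f*) for all x, and f(0) - f* ≥ (G₀/G₁)(exp(RG₁/4) - 1). -/
open Real Filter Topology

lemma expabs_convex (c G : ℝ) (hG : 0 ≤ G) :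
    ConvexOn ℝ Set.univ (fun x => Real.exp (G * |x - c|)) := by
  refine ⟨convex_univ, fun x _ y _ a b ha hb hab => ?_⟩
  simp only [smul_eq_mul]
  have habs : |a * x + b * y - c| ≤ a * |x - c| + b * |y - c| := by
    have h1 : a * x + b * y - c = a * (x - c) + b * (y - c) := by linear_combination c * hab
    rw [h1]
    calc |a * (x - c) + b * (y - c)| ≤ |a * (x - c)| + |b * (y - c)| := abs_add_le _ _
      _ = a * |x - c| + b * |y - c| := by
          rw [abs_mul, abs_mul, abs_of_nonneg ha, abs_of_nonneg hb]
  have h2 : Real.exp (G * |a * x + b * y - c|) ≤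
      Real.exp (a * (G * |x - c|) + b * (G * |y - c|)) := by
    apply Real.exp_le_exp.2; nlinarith
  refine h2.trans ?_
  have := convexOn_exp.2 (Set.mem_univ (G * |x - c|)) (Set.mem_univ (G * |y - c|)) ha hb hab
  simpa [smul_eq_mul] using this

lemma affine_convex (m b : ℝ) : ConvexOn ℝ Set.univ (fun x : ℝ => m * x + b) := by
  refine ⟨convex_univ, fun x _ y _ a bb ha hb hab => ?_⟩
  simp only [smul_eq_mul]
  apply le_of_eq; linear_combination -b * hab

lemma phi_mono (r c q D G s B : ℝ) (hD : 0 ≤ D) (hG : 0 < G)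
    (hrc : G * (c - r) ≤ q) (hs : s = D * G * Real.exp q) :
    MonotoneOn (fun x => D * Real.exp (G * |x - c|) + (s * x + B)) (Set.Ici r) := by
  intro x hx y hy hxy
  simp only [Set.mem_Ici] at hx hy
  simp only
  subst hs
  set ax := G * |x - c| with hax
  set ay := G * |y - c| with hay
  have hpos := Real.exp_pos ax
  have h1 : Real.exp ax * (ay - ax) + Real.exp ax ≤ Real.exp ay := by
    have h0 := Real.add_one_le_exp (ay - ax)
    have e1 : Real.exp ax * Real.exp (ay - ax) = Real.exp ay := by
      rw [← Real.exp_add]; ring_nf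
    nlinarith [mul_le_mul_of_nonneg_left h0 hpos.le]
  have h2 : |x - c| - |y - c| ≤ y - x := by
    have := abs_sub_abs_le_abs_sub (x - c) (y - c)
    have h3 : |x - c - (y - c)| = y - x := by
      rw [show x - c - (y - c) = -(y - x) by ring, abs_neg, abs_of_nonneg (by linarith)]
    linarith
  rcases le_or_gt x c with hxc | hxc
  · have haxe : |x - c| = c - x := by rw [abs_of_nonpos (by linarith)]; ring
    have haq : ax ≤ q := by rw [hax, haxe]; nlinarith
    have hq : Real.exp ax ≤ Real.exp q := Real.exp_le_exp.2 haq
    have hp2 : (0:ℝ) ≤ (ay - ax) + G * (y - x) := by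
      rw [hax, hay]; nlinarith
    have A : 0 ≤ D * (Real.exp ay - Real.exp ax * (ay - ax) - Real.exp ax) :=
      mul_nonneg hD (by linarith)
    have B' : 0 ≤ D * (Real.exp ax * ((ay - ax) + G * (y - x))) :=
      mul_nonneg hD (mul_nonneg hpos.le hp2)
    have C : 0 ≤ D * G * ((Real.exp q - Real.exp ax) * (y - x)) :=
      mul_nonneg (mul_nonneg hD hG.le) (mul_nonneg (by linarith) (by linarith))
    nlinarith [A, B', C]
  · have haxe : |x - c| = x - c := abs_of_nonneg (by linarith)
    have haye : |y - c| = y - c := abs_of_nonneg (by linarith)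
    have hexy : Real.exp ax ≤ Real.exp ay := by
      apply Real.exp_le_exp.2; rw [hax, hay, haxe, haye]; nlinarith
    nlinarith [mul_nonneg hD (sub_nonneg.2 hexy),
      mul_nonneg (mul_nonneg (mul_nonneg hD hG.le) (Real.exp_pos q).le) (sub_nonneg.2 hxy)]

lemma convexOn_comp_max {φ : ℝ → ℝ} {r : ℝ} (hc : ConvexOn ℝ Set.univ φ)
    (hm : MonotoneOn φ (Set.Ici r)) :
    ConvexOn ℝ Set.univ (fun x => φ (max x r)) := by
  refine ⟨convex_univ, fun x _ y _ a b ha hb hab => ?_⟩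
  simp only [smul_eq_mul]
  have e1 : a * r + b * r = r := by linear_combination r * hab
  have m1 := mul_le_mul_of_nonneg_left (le_max_right x r) ha
  have m2 := mul_le_mul_of_nonneg_left (le_max_right y r) hb
  have hmem2 : a * max x r + b * max y r ∈ Set.Ici r := by
    simp only [Set.mem_Ici]; linarith
  have h1 : max (a*x+b*y) r ≤ a * max x r + b * max y r := by
    apply max_le
    · have := mul_le_mul_of_nonneg_left (le_max_left x r) ha
      have := mul_le_mul_of_nonneg_left (le_max_left y r) hb
      linarith
    · exact hmem2
  calc φ (max (a*x+b*y) r) ≤ φ (a * max x r + b * max y r) :=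
        hm (Set.mem_Ici.2 (le_max_right _ _)) hmem2 h1
    _ ≤ a * φ (max x r) + b * φ (max y r) := by
        simpa [smul_eq_mul] using hc.2 (Set.mem_univ (max x r)) (Set.mem_univ (max y r)) ha hb hab

-- the quotient tendsto lemma
lemma exp_quot_tendsto (G₁ M : ℝ) (hG₁ : 0 < G₁) :
    Tendsto (fun t : ℝ => M * ((Real.exp (G₁*t) - 1)/(G₁*t))) (𝓝[>] (0:ℝ)) (𝓝 M) := by
  have h0 : HasDerivAt Real.exp 1 0 := by simpa using Real.hasDerivAt_exp 0
  rw [hasDerivAt_iff_tendsto_slope] at h0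
  have hmap : Tendsto (fun t : ℝ => G₁ * t) (𝓝[>] (0:ℝ)) (𝓝[≠] (0:ℝ)) := by
    apply tendsto_nhdsWithin_of_tendsto_nhds_of_eventually_within
    · have : Tendsto (fun t : ℝ => G₁ * t) (𝓝 0) (𝓝 (G₁ * 0)) :=
        (continuous_const.mul continuous_id).tendsto 0
      simpa using this.mono_left nhdsWithin_le_nhds
    · filter_upwards [self_mem_nhdsWithin] with t ht
      have : (0:ℝ) < t := ht
      simp only [Set.mem_compl_iff, Set.mem_singleton_iff]
      positivity
  have h1 := h0.comp hmap
  have h2 := h1.const_mul M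
  rw [mul_one] at h2
  convert h2 using 2 with t
  simp [slope_def_field, Function.comp, Real.exp_zero]

theorem sgd_lower_bound_hard_instance (R G₀ G₁ : ℝ)
    (hR : 0 < R) (hG₀ : 0 < G₀) (hG₁ : 0 < G₁)
    (f : ℝ → ℝ)
    (hf : ∀ x, f x =
      if R / 2 ≤ x then (G₀ / G₁) * (Real.exp (G₁ * |x - 3 * R / 4|) - 1)
      else G₀ * Real.exp (R * G₁ / 4) * (R / 2 - x) +
        (G₀ / G₁) * (Real.exp (R * G₁ / 4) - 1)) :
    ConvexOn ℝ Set.univ f ∧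
    (∀ x g : ℝ, (∀ y, f x + g * (y - x) ≤ f y) →
      |g| ≤ G₀ + G₁ * (f x - 0)) ∧
    f 0 - 0 ≥ (G₀ / G₁) * (Real.exp (R * G₁ / 4) - 1) := by
  have hd0 : (0:ℝ) ≤ G₀/G₁ := div_nonneg hG₀.le hG₁.le
  have hqpos := Real.exp_pos (R*G₁/4)
  refine ⟨?_, ?_, ?_⟩
  · -- convexity
    set B : ℝ := -(G₀/G₁) - G₀*Real.exp (R*G₁/4)*(R/2) - (G₀/G₁)*(Real.exp (R*G₁/4)-1) with hB
    set C : ℝ := G₀*Real.exp (R*G₁/4)*(R/2) + (G₀/G₁)*(Real.exp (R*G₁/4)-1) with hC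
    set φ : ℝ → ℝ := fun x =>
      (G₀/G₁) * Real.exp (G₁*|x - 3*R/4|) + (G₀*Real.exp (R*G₁/4) * x + B) with hφ
    have hφc : ConvexOn ℝ Set.univ φ :=
      ((expabs_convex (3*R/4) G₁ hG₁.le).smul hd0).add
        (affine_convex (G₀*Real.exp (R*G₁/4)) B)
    have hφm : MonotoneOn φ (Set.Ici (R/2)) :=
      phi_mono (R/2) (3*R/4) (R*G₁/4) (G₀/G₁) G₁ (G₀*Real.exp (R*G₁/4)) B hd0 hG₁
        (le_of_eq (by ring)) (by field_simp)
    have htot := (affine_convex (-(G₀*Real.exp (R*G₁/4))) C).add (convexOn_comp_max hφc hφm)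
    have key : ∀ x, f x = (-(G₀*Real.exp (R*G₁/4)) * x + C) + φ (max x (R/2)) := by
      intro x
      rw [hf x]
      by_cases h : R/2 ≤ x
      · rw [if_pos (by linarith [h] : R/2 ≤ x), max_eq_left h]
        simp only [hφ, hB, hC]; ring
      · push_neg at h
        rw [if_neg (by intro hc; linarith), max_eq_right h.le]
        simp only [hφ, hB, hC]
        rw [show G₁ * |R/2 - 3*R/4| = R*G₁/4 by rw [abs_of_nonpos (by linarith)]; ring]
        ring
    have : f = fun x => (-(G₀*Real.exp (R*G₁/4)) * x + C) + φ (max x (R/2)) := funext key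
    rw [this]; exact htot
  · -- subgradient bound
    intro x g hg
    by_cases hx : R/2 ≤ x
    · have hfx : f x = (G₀/G₁) * (Real.exp (G₁*|x - 3*R/4|) - 1) := by
        rw [hf x]; rw [if_pos (by linarith)]
      set M := G₀ * Real.exp (G₁*|x - 3*R/4|) with hM
      have hMeq : G₀ + G₁ * (f x - 0) = M := by
        rw [hfx, hM]; field_simp; ring
      rw [hMeq, abs_le]
      have hEpos := Real.exp_pos (G₁*|x - 3*R/4|)
      have hMpos : 0 < M := mul_pos hG₀ hEpos
      have hT := exp_quot_tendsto G₁ M hG₁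
      have hd : G₀/G₁ * G₁ = G₀ := div_mul_cancel₀ _ (ne_of_gt hG₁)
      constructor
      · -- -M ≤ g
        by_cases hxr : R/2 < x
        · have hev : ∀ᶠ t in 𝓝[>] (0:ℝ), -g ≤ M * ((Real.exp (G₁*t) - 1)/(G₁*t)) := by
            have hsub : Set.Ioo (0:ℝ) (x - R/2) ∈ 𝓝[>] (0:ℝ) :=
              Ioo_mem_nhdsGT_of_mem ⟨le_refl 0, by linarith⟩
            filter_upwards [hsub] with t ht
            obtain ⟨ht0, htlt⟩ := ht
            have h1 := hg (x - t)
            rw [hf (x - t), if_pos (by linarith), hfx] at h1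
            have h2 : |x - t - 3*R/4| ≤ |x - 3*R/4| + t := by
              calc |x - t - 3*R/4| = |(x - 3*R/4) + (-t)| := by ring_nf
                _ ≤ |x - 3*R/4| + |(-t)| := abs_add_le _ _
                _ = |x - 3*R/4| + t := by rw [abs_neg, abs_of_pos ht0]
            have h3 : Real.exp (G₁*|x - t - 3*R/4|) ≤
                Real.exp (G₁*|x - 3*R/4|) * Real.exp (G₁*t) := by
              rw [← Real.exp_add]; apply Real.exp_le_exp.2; nlinarith
            have s1 : -g * t ≤ (G₀/G₁) * (Real.exp (G₁*|x - t - 3*R/4|)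
                - Real.exp (G₁*|x - 3*R/4|)) := by linarith [h1]
            have s2 : (G₀/G₁) * (Real.exp (G₁*|x - t - 3*R/4|)
                - Real.exp (G₁*|x - 3*R/4|)) ≤
                (G₀/G₁) * (Real.exp (G₁*|x - 3*R/4|) * (Real.exp (G₁*t) - 1)) := by
              apply mul_le_mul_of_nonneg_left _ hd0; linarith [h3]
            have hdm : (G₀/G₁) * (Real.exp (G₁*|x - 3*R/4|) * (Real.exp (G₁*t) - 1)) * G₁
                = M * (Real.exp (G₁*t) - 1) := by
              rw [hM]; field_simp
            have s3 : -g * (G₁*t) ≤ M * (Real.exp (G₁*t) - 1) := by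
              linarith [mul_le_mul_of_nonneg_right (s1.trans s2) hG₁.le, hdm]
            rw [mul_div_assoc'] at *
            rw [le_div_iff₀ (by positivity)]
            linarith [s3]
          have := ge_of_tendsto hT hev
          linarith
        · have hxeq : x = R/2 := le_antisymm (not_lt.mp hxr) hx
          have h1 := hg (x - 1)
          rw [hf (x - 1), if_neg (by intro hc; rw [hxeq] at hc; linarith), hfx] at h1
          rw [show G₁ * |x - 3*R/4| = R*G₁/4 by
            rw [hxeq, abs_of_nonpos (by linarith)]; ring] at *
          have : -g ≤ G₀ * Real.exp (R*G₁/4) := by rw [hxeq] at h1; linarith [h1]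
          rw [hM]; linarith
      · -- g ≤ M
        have hev : ∀ᶠ t in 𝓝[>] (0:ℝ), g ≤ M * ((Real.exp (G₁*t) - 1)/(G₁*t)) := by
          filter_upwards [self_mem_nhdsWithin] with t ht
          have ht0 : (0:ℝ) < t := ht
          have h1 := hg (x + t)
          rw [hf (x + t), if_pos (by linarith), hfx] at h1
          have h2 : |x + t - 3*R/4| ≤ |x - 3*R/4| + t := by
            calc |x + t - 3*R/4| = |(x - 3*R/4) + t| := by ring_nf
              _ ≤ |x - 3*R/4| + |t| := abs_add_le _ _
              _ = |x - 3*R/4| + t := by rw [abs_of_pos ht0]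
          have h3 : Real.exp (G₁*|x + t - 3*R/4|) ≤
              Real.exp (G₁*|x - 3*R/4|) * Real.exp (G₁*t) := by
            rw [← Real.exp_add]; apply Real.exp_le_exp.2; nlinarith
          have s1 : g * t ≤ (G₀/G₁) * (Real.exp (G₁*|x + t - 3*R/4|)
              - Real.exp (G₁*|x - 3*R/4|)) := by nlinarith [h1]
          have s2 : (G₀/G₁) * (Real.exp (G₁*|x + t - 3*R/4|)
              - Real.exp (G₁*|x - 3*R/4|)) ≤
              (G₀/G₁) * (Real.exp (G₁*|x - 3*R/4|) * (Real.exp (G₁*t) - 1)) := by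
            apply mul_le_mul_of_nonneg_left _ hd0; linarith [h3]
          have hdm : (G₀/G₁) * (Real.exp (G₁*|x - 3*R/4|) * (Real.exp (G₁*t) - 1)) * G₁
              = M * (Real.exp (G₁*t) - 1) := by
            rw [hM]; field_simp
          have s3 : g * (G₁*t) ≤ M * (Real.exp (G₁*t) - 1) := by
            linarith [mul_le_mul_of_nonneg_right (s1.trans s2) hG₁.le, hdm]
          rw [mul_div_assoc']
          rw [le_div_iff₀ (by positivity)]
          linarith [s3]
        exact ge_of_tendsto hT hev
    · -- affine region
      push_neg at hx
      have hfx : f x = G₀*Real.exp (R*G₁/4)*(R/2 - x) + (G₀/G₁)*(Real.exp (R*G₁/4)-1) := by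
        rw [hf x, if_neg (by intro hc; linarith)]
      have hyx : (0:ℝ) < (x + R/2)/2 - x := by linarith
      have h1 := hg ((x + R/2)/2)
      rw [hf ((x + R/2)/2), if_neg (by intro hc; linarith), hfx] at h1
      have hup : g ≤ -(G₀ * Real.exp (R*G₁/4)) := by
        have hw : g * ((x + R/2)/2 - x) ≤
            -(G₀ * Real.exp (R*G₁/4)) * ((x + R/2)/2 - x) := by linarith [h1]
        exact le_of_mul_le_mul_right hw hyx
      have h2 := hg (x - 1)
      rw [hf (x - 1), if_neg (by intro hc; linarith), hfx] at h2
      have hlo : -(G₀ * Real.exp (R*G₁/4)) ≤ g := by linarith [h2]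
      have habs : |g| ≤ G₀ * Real.exp (R*G₁/4) := by
        rw [abs_le]
        constructor
        · linarith
        · linarith [hup, (mul_pos hG₀ hqpos).le]
      have hd : G₀/G₁ * G₁ = G₀ := div_mul_cancel₀ _ (ne_of_gt hG₁)
      have : G₀ * Real.exp (R*G₁/4) ≤ G₀ + G₁ * (f x - 0) := by
        rw [hfx]
        have hd2 : G₁*(G₀/G₁*(Real.exp (R*G₁/4)-1)) = G₀*(Real.exp (R*G₁/4)-1) := by
          field_simp
        have hd3 : 0 ≤ G₁*(G₀*(Real.exp (R*G₁/4))*(R/2 - x)) :=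
          mul_nonneg hG₁.le (mul_nonneg (mul_nonneg hG₀.le hqpos.le) (by linarith))
        linarith [hd2, hd3]
      linarith
  · -- lower bound at 0
    rw [hf 0, if_neg (by intro hc; linarith)]
    nlinarith [mul_pos (mul_pos hG₀ hqpos) hR]
end

section
/- Let r ≥ 0, R > 0, ε > 0 with 8ε/R ≤ G₀ e^{G₁ r}, and define f : ℝ → ℝ by f(x) = (G₀/G₁)(exp(G₁|x - R/2|) - 1) for |x - R/2| ≤ r and f(x) = (8ε/R)(|x - R/2| - r) + (G₀/G₁)(exp(G₁ r) - 1) for |x - R/2| > r, where r = max{0, (1/G₁) ln(8ε/(R G₀))}. Then f is convex, differentiable at |x - R/2| = r when r > 0, and every subgradient g at any x satisfies |g| ≤ G₀ + G₁(f(x) - f*), where f* = 0. -/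
/-!
Write `f x = φ |x - R/2|`, where `φ` is the exponential profile up to `r` followed by the line of
slope `s = 8ε/R`. For `r > 0` the choice of `r` makes the line tangent to the exponential at `r`,
so `φ` is differentiable there and has supporting lines on `[0, ∞)`; being also monotone, `φ`
composed with `|· - R/2|` is convex. The right derivative `φ'₊` of `φ` satisfies
`φ'₊ ≤ G₀ + G₁ φ` (with equality on the exponential piece, and `s ≤ G₀ e^{G₁ r}` on the linear
one), and a subgradient `g` at `x` obeys `|g| δ ≤ φ (|x - R/2| + δ) - φ |x - R/2|` for `δ > 0`,
whence `|g| ≤ φ'₊ |x - R/2|`.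
-/

open Real Set Filter Topology

theorem convexOn_of_forall_add_mul_le {S : Set ℝ} {φ k : ℝ → ℝ} (hS : Convex ℝ S)
    (h : ∀ a ∈ S, ∀ b ∈ S, φ a + k a * (b - a) ≤ φ b) : ConvexOn ℝ S φ := by
  refine ⟨hS, fun x hx y hy a b ha hb hab => ?_⟩
  have hz := hS hx hy ha hb hab
  set z := a • x + b • y
  have hx' := mul_le_mul_of_nonneg_left (h z hz x hx) ha
  have hy' := mul_le_mul_of_nonneg_left (h z hz y hy) hb
  have hcomb : a * (x - z) + b * (y - z) = 0 := by
    simp only [z, smul_eq_mul]; linear_combination -(a * x + b * y) * hab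
  have hsum : a * (φ z + k z * (x - z)) + b * (φ z + k z * (y - z)) = φ z := by
    linear_combination φ z * hab + k z * hcomb
  simp only [smul_eq_mul]
  linarith

theorem ConvexOn.comp_abs_sub {φ : ℝ → ℝ} (hφ : ConvexOn ℝ (Ici 0) φ)
    (hmono : MonotoneOn φ (Ici 0)) (c : ℝ) : ConvexOn ℝ univ fun x => φ |x - c| := by
  have himage : (fun x => dist x c) '' univ = Ici 0 := by
    ext t
    refine ⟨by rintro ⟨x, -, rfl⟩; exact dist_nonneg, fun ht => ⟨c + t, trivial, ?_⟩⟩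
    simp [abs_of_nonneg (mem_Ici.1 ht)]
  have := (himage ▸ hφ).comp (convexOn_univ_dist c) (himage ▸ hmono)
  simpa only [Function.comp_def, Real.dist_eq] using this

theorem differentiableAt_comp_abs_sub {φ : ℝ → ℝ} {c x : ℝ}
    (hφ : DifferentiableAt ℝ φ |x - c|) (hx : x ≠ c) :
    DifferentiableAt ℝ (fun y => φ |y - c|) x :=
  hφ.comp x ((differentiableAt_id.sub_const c).abs (sub_ne_zero.2 hx))

theorem HasDerivWithinAt.le_of_forall_le_slope {f : ℝ → ℝ} {f' x a : ℝ}
    (hf : HasDerivWithinAt f f' (Ici x) x) (h : ∀ z, x < z → a ≤ slope f x z) : a ≤ f' := by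
  by_contra! hlt
  obtain ⟨z, hslope, hz⟩ :=
    ((hf.liminf_right_slope_le hlt).and_eventually self_mem_nhdsWithin).exists
  exact (h z hz).not_gt hslope

/-- Stepping from `x` by `δ` in the direction of `sign g` raises `|· - c|` by at most `δ`. -/
theorem abs_le_of_subgradient_comp_abs_sub {φ : ℝ → ℝ} {c x g d : ℝ} (hmono : Monotone φ)
    (hd : HasDerivWithinAt φ d (Ici |x - c|) |x - c|)
    (hg : ∀ y, φ |x - c| + g * (y - x) ≤ φ |y - c|) : |g| ≤ d := by
  refine hd.le_of_forall_le_slope fun z hz => ?_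
  rw [slope_def_field, le_div_iff₀ (sub_pos.2 hz)]
  obtain ⟨σ, hσ, hσg⟩ : ∃ σ : ℝ, |σ| = 1 ∧ g * σ = |g| := by
    rcases le_or_gt 0 g with h | h
    · exact ⟨1, abs_one, by rw [mul_one, abs_of_nonneg h]⟩
    · exact ⟨-1, by simp, by rw [abs_of_neg h]; ring⟩
  set δ := z - |x - c|
  have hdist : |x + σ * δ - c| ≤ z := by
    calc |x + σ * δ - c| = |σ * δ + (x - c)| := by ring_nf
      _ ≤ |σ * δ| + |x - c| := abs_add_le _ _
      _ = z := by rw [abs_mul, hσ, abs_of_pos (sub_pos.2 hz)]; ring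
  have hstep := hg (x + σ * δ)
  have hmono_step := hmono hdist
  calc |g| * δ = g * (x + σ * δ - x) := by rw [← hσg]; ring
    _ ≤ φ z - φ |x - c| := by linarith

noncomputable def expProfile (G₀ G₁ t : ℝ) : ℝ := G₀ / G₁ * (exp (G₁ * t) - 1)

noncomputable def gluedProfile (G₀ G₁ r s t : ℝ) : ℝ :=
  if t ≤ r then expProfile G₀ G₁ t else s * (t - r) + expProfile G₀ G₁ r

noncomputable def gluedSlope (G₀ G₁ r s t : ℝ) : ℝ := if t < r then G₀ * exp (G₁ * t) else s

section Profile

variable {G₀ G₁ r s : ℝ}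

theorem hasDerivAt_expProfile (hG₁ : G₁ ≠ 0) (t : ℝ) :
    HasDerivAt (expProfile G₀ G₁) (G₀ * exp (G₁ * t)) t := by
  have h : HasDerivAt (expProfile G₀ G₁) (G₀ / G₁ * (exp (G₁ * t) * (G₁ * 1))) t :=
    (((hasDerivAt_id t).const_mul G₁).exp.sub_const 1).const_mul (G₀ / G₁)
  exact h.congr_deriv (by field_simp)

theorem add_mul_expProfile (hG₁ : G₁ ≠ 0) (t : ℝ) :
    G₀ + G₁ * expProfile G₀ G₁ t = G₀ * exp (G₁ * t) := by
  unfold expProfile; field_simp; ring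

theorem expProfile_add_mul_le (hG₀ : 0 ≤ G₀) (hG₁ : 0 < G₁) (a b : ℝ) :
    expProfile G₀ G₁ a + G₀ * exp (G₁ * a) * (b - a) ≤ expProfile G₀ G₁ b := by
  have hexp : exp (G₁ * a) * (1 + G₁ * (b - a)) ≤ exp (G₁ * b) := by
    calc exp (G₁ * a) * (1 + G₁ * (b - a)) ≤ exp (G₁ * a) * exp (G₁ * (b - a)) := by
          gcongr; linarith [add_one_le_exp (G₁ * (b - a))]
      _ = exp (G₁ * b) := by rw [← exp_add]; ring_nf
  have := mul_le_mul_of_nonneg_left hexp (div_nonneg hG₀ hG₁.le)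
  unfold expProfile
  calc G₀ / G₁ * (exp (G₁ * a) - 1) + G₀ * exp (G₁ * a) * (b - a)
      = G₀ / G₁ * (exp (G₁ * a) * (1 + G₁ * (b - a))) - G₀ / G₁ := by field_simp; ring
    _ ≤ G₀ / G₁ * (exp (G₁ * b) - 1) := by linarith

theorem monotone_expProfile (hG₀ : 0 ≤ G₀) (hG₁ : 0 < G₁) : Monotone (expProfile G₀ G₁) :=
  fun a b hab => by
    nlinarith [expProfile_add_mul_le hG₀ hG₁ a b, mul_nonneg hG₀ (exp_pos (G₁ * a)).le]

theorem gluedProfile_of_le {t : ℝ} (ht : r ≤ t) :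
    gluedProfile G₀ G₁ r s t = s * (t - r) + expProfile G₀ G₁ r := by
  unfold gluedProfile
  split_ifs with h
  · rw [le_antisymm h ht]; ring
  · rfl

theorem monotone_gluedProfile (hG₀ : 0 ≤ G₀) (hG₁ : 0 < G₁) (hs : 0 ≤ s) :
    Monotone (gluedProfile G₀ G₁ r s) := by
  intro a b hab
  have hE := monotone_expProfile hG₀ hG₁
  rcases le_or_gt b r with hb | hb
  · simp only [gluedProfile, if_pos hb, if_pos (hab.trans hb)]
    exact hE hab
  · rw [gluedProfile_of_le hb.le]
    rcases le_or_gt a r with ha | ha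
    · rw [gluedProfile, if_pos ha]
      nlinarith [hE ha]
    · rw [gluedProfile_of_le ha.le]
      nlinarith

theorem hasDerivWithinAt_gluedProfile_Ici (hG₁ : G₁ ≠ 0) (t : ℝ) :
    HasDerivWithinAt (gluedProfile G₀ G₁ r s) (gluedSlope G₀ G₁ r s t) (Ici t) t := by
  by_cases ht : t < r
  · rw [gluedSlope, if_pos ht]
    refine ((hasDerivAt_expProfile hG₁ t).congr_of_eventuallyEq ?_).hasDerivWithinAt
    filter_upwards [Iic_mem_nhds ht] with y hy
    exact if_pos hy
  · rw [gluedSlope, if_neg ht]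
    have hlin : HasDerivAt (fun y => s * (y - r) + expProfile G₀ G₁ r) s t := by
      simpa using (((hasDerivAt_id t).sub_const r).const_mul s).add_const (expProfile G₀ G₁ r)
    exact hlin.hasDerivWithinAt.congr_of_mem
      (fun y hy => gluedProfile_of_le ((not_lt.1 ht).trans hy)) self_mem_Ici

theorem hasDerivAt_gluedProfile (hG₁ : G₁ ≠ 0) (htangent : G₀ * exp (G₁ * r) = s) :
    HasDerivAt (gluedProfile G₀ G₁ r s) s r := by
  have hleft : HasDerivWithinAt (gluedProfile G₀ G₁ r s) s (Iic r) r :=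
    htangent ▸ (hasDerivAt_expProfile hG₁ r).hasDerivWithinAt.congr_of_mem
      (fun y hy => if_pos hy) self_mem_Iic
  have hright : HasDerivWithinAt (gluedProfile G₀ G₁ r s) s (Ici r) r := by
    simpa [gluedSlope] using hasDerivWithinAt_gluedProfile_Ici (r := r) (s := s) hG₁ r
  simpa [Iic_union_Ici, hasDerivWithinAt_univ] using hleft.union hright

theorem gluedProfile_add_slope_mul_le (hG₀ : 0 ≤ G₀) (hG₁ : 0 < G₁)
    (htangent : 0 < r → G₀ * exp (G₁ * r) = s) {a b : ℝ} (ha : 0 ≤ a) (hb : 0 ≤ b) :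
    gluedProfile G₀ G₁ r s a + gluedSlope G₀ G₁ r s a * (b - a) ≤ gluedProfile G₀ G₁ r s b := by
  by_cases har : a < r
  · have hslope : G₀ * exp (G₁ * a) ≤ s := by
      rw [← htangent (ha.trans_lt har)]
      gcongr
    rw [gluedSlope, if_pos har, gluedProfile, if_pos har.le]
    rcases le_or_gt b r with hbr | hbr
    · rw [gluedProfile, if_pos hbr]
      exact expProfile_add_mul_le hG₀ hG₁ a b
    · rw [gluedProfile_of_le hbr.le]
      nlinarith [expProfile_add_mul_le hG₀ hG₁ a r]
  · rw [not_lt] at har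
    rw [gluedSlope, if_neg (not_lt.2 har), gluedProfile_of_le har]
    rcases le_or_gt r b with hbr | hbr
    · rw [gluedProfile_of_le hbr]; linarith
    · rw [gluedProfile, if_pos hbr.le]
      have htan := expProfile_add_mul_le hG₀ hG₁ r b
      rw [htangent (hb.trans_lt hbr)] at htan
      linarith

theorem convexOn_gluedProfile (hG₀ : 0 ≤ G₀) (hG₁ : 0 < G₁)
    (htangent : 0 < r → G₀ * exp (G₁ * r) = s) : ConvexOn ℝ (Ici 0) (gluedProfile G₀ G₁ r s) :=
  convexOn_of_forall_add_mul_le (convex_Ici 0) fun _ ha _ hb =>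
    gluedProfile_add_slope_mul_le hG₀ hG₁ htangent ha hb

theorem gluedSlope_le (hG₁ : 0 < G₁) (hs : 0 ≤ s) (hsle : s ≤ G₀ * exp (G₁ * r)) (t : ℝ) :
    gluedSlope G₀ G₁ r s t ≤ G₀ + G₁ * gluedProfile G₀ G₁ r s t := by
  by_cases ht : t < r
  · rw [gluedSlope, if_pos ht, gluedProfile, if_pos ht.le, add_mul_expProfile hG₁.ne']
  · rw [gluedSlope, if_neg ht, gluedProfile_of_le (not_lt.1 ht), mul_add, ← add_assoc,
      add_comm G₀, add_assoc, add_mul_expProfile hG₁.ne']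
    nlinarith [mul_nonneg (mul_nonneg hG₁.le hs) (sub_nonneg.2 (not_lt.1 ht))]

end Profile

theorem mul_exp_eq_of_eq_max_log {G₀ G₁ r s : ℝ} (hG₀ : 0 < G₀) (hG₁ : 0 < G₁) (hs : 0 < s)
    (hr : r = max 0 (1 / G₁ * log (s / G₀))) (hpos : 0 < r) : G₀ * exp (G₁ * r) = s := by
  have hlog : r = 1 / G₁ * log (s / G₀) := by
    rw [hr] at hpos ⊢
    exact max_eq_right (le_of_lt (by simpa using hpos))
  rw [hlog, ← mul_assoc, mul_one_div_cancel hG₁.ne', one_mul, exp_log (by positivity)]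
  field_simp

theorem sgd_lower_bound_glued_instance (R G₀ G₁ ε r : ℝ)
    (hR : 0 < R) (hG₀ : 0 < G₀) (hG₁ : 0 < G₁) (hε : 0 < ε)
    (hr : r = max 0 ((1 / G₁) * Real.log (8 * ε / (R * G₀))))
    (hslope : 8 * ε / R ≤ G₀ * Real.exp (G₁ * r))
    (f : ℝ → ℝ)
    (hf : ∀ x, f x =
      if |x - R / 2| ≤ r then (G₀ / G₁) * (Real.exp (G₁ * |x - R / 2|) - 1)
      else (8 * ε / R) * (|x - R / 2| - r) + (G₀ / G₁) * (Real.exp (G₁ * r) - 1)) :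
    ConvexOn ℝ Set.univ f ∧
    (0 < r → DifferentiableAt ℝ f (R / 2 + r) ∧ DifferentiableAt ℝ f (R / 2 - r)) ∧
    (∀ x g : ℝ, (∀ y, f x + g * (y - x) ≤ f y) →
      |g| ≤ G₀ + G₁ * (f x - 0)) := by
  set s := 8 * ε / R
  have hs : 0 < s := by positivity
  have htangent : 0 < r → G₀ * exp (G₁ * r) = s :=
    mul_exp_eq_of_eq_max_log hG₀ hG₁ hs (by rwa [div_div])
  have hφ : f = fun x => gluedProfile G₀ G₁ r s |x - R / 2| := funext hf
  have hmono := monotone_gluedProfile (r := r) hG₀.le hG₁ hs.le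
  subst hφ
  refine ⟨(convexOn_gluedProfile hG₀.le hG₁ htangent).comp_abs_sub (hmono.monotoneOn _) _,
    fun hpos => ?_, fun x g hg => ?_⟩
  · have hdiff := (hasDerivAt_gluedProfile hG₁.ne' (htangent hpos)).differentiableAt
    constructor <;>
      exact differentiableAt_comp_abs_sub (by simpa [abs_of_pos hpos] using hdiff) (by linarith)
  · rw [sub_zero]
    exact (abs_le_of_subgradient_comp_abs_sub hmono
      (hasDerivWithinAt_gluedProfile_Ici hG₁.ne' _) hg).trans (gluedSlope_le hG₁ hs.le hslope _)
end

section
/- Let f be differentiable with minimum f*, ν ∈ [0,1], σ, L₀, L₁ ≥ 0 with σ = 0 when ν = 0, and suppose ‖∇f(x)‖ ≤ √(σ² + L₀^{2/(1+ν)}(f(x)-f*)^{2ν/(1+ν)}) + L₁(f(x)-f*) for all x. Define β = min{(σ^{1+ν}/L₀)^{1/ν}, σ/L₁} and h(x) = (β + f(x) - f*)^{1/(1+ν)}. Then ‖∇h(x)‖ ≤ (2/(1+ν)) L₀^{1/(1+ν)} + (1/(1+ν)) L₁ h(x) for all x. -/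
/-!
With `p = 1/(1+ν)` and `s = β + f x - f*`, the chain rule gives `∇h x = p s^(p-1) ∇f x`, and
`√(a² + b²) ≤ a + b` turns the growth hypothesis into
`‖∇f x‖ ≤ σ + L₀^p Δ^(1-p) + L₁ Δ` with `Δ = f x - f*`. The choice of `β` as a minimum makes `σ`
equal to `L₀^p β^(1-p)` or to `L₁ β`. Since `β, Δ ≤ s`, multiplying by `s^(p-1)` bounds each
`L₀^p t^(1-p)` term by `L₀^p`, and `L₁ (β + Δ) s^(p-1) = L₁ h x`. Where `s = 0`, `x` minimizes
`h ≥ 0`, so `∇h x = 0`.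
-/
open Real

section Gradient

variable {F : Type*} [NormedAddCommGroup F] [InnerProductSpace ℝ F] [CompleteSpace F]
  {f : F → ℝ} {f' x : F}

theorem HasDerivAt.comp_hasGradientAt {g : ℝ → ℝ} {g' : ℝ} (hg : HasDerivAt g g' (f x))
    (hf : HasGradientAt f f' x) : HasGradientAt (g ∘ f) (g' • f') x := by
  rw [hasGradientAt_iff_hasFDerivAt, map_smul]
  exact hg.comp_hasFDerivAt x hf.hasFDerivAt

theorem IsLocalMin.gradient_eq_zero (h : IsLocalMin f x) : gradient f x = 0 := by
  rw [gradient, h.fderiv_eq_zero, map_zero]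

end Gradient

theorem rpow_sub_one_mul_rpow_one_sub_le_one {p s t : ℝ} (hp : p ≤ 1) (hs : 0 < s) (ht : 0 ≤ t)
    (hts : t ≤ s) : s ^ (p - 1) * t ^ (1 - p) ≤ 1 := by
  calc s ^ (p - 1) * t ^ (1 - p) ≤ s ^ (p - 1) * s ^ (1 - p) := by gcongr
    _ = 1 := by rw [← rpow_add hs]; norm_num

theorem sqrt_sq_add_rpow_two_mul_le {σ a b p q : ℝ} (hσ : 0 ≤ σ) (ha : 0 ≤ a) (hb : 0 ≤ b) :
    √(σ ^ 2 + a ^ (2 * p) * b ^ (2 * q)) ≤ σ + a ^ p * b ^ q := by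
  have hsq (c r : ℝ) (hc : 0 ≤ c) : c ^ (2 * r) = (c ^ r) ^ 2 := by
    rw [mul_comm, rpow_mul hc, rpow_two]
  rw [sqrt_le_left (by positivity), hsq a p ha, hsq b q hb]
  nlinarith [mul_nonneg hσ (mul_nonneg (rpow_nonneg ha p) (rpow_nonneg hb q))]

theorem le_rpow_mul_rpow_add_mul_of_eq_min {ν σ L₀ L₁ β : ℝ} (hν : 0 ≤ ν) (hσ : 0 ≤ σ)
    (hL₀ : 0 < L₀) (hL₁ : 0 < L₁) (hν0 : ν = 0 → σ = 0)
    (hβ : β = min ((σ ^ (1 + ν) / L₀) ^ (1 / ν)) (σ / L₁)) :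
    σ ≤ L₀ ^ (1 / (1 + ν)) * β ^ (1 - 1 / (1 + ν)) + L₁ * β := by
  have hβ0 : 0 ≤ β := hβ ▸ le_min (by positivity) (by positivity)
  rcases hν.eq_or_lt with rfl | hν
  · rw [hν0 rfl]; positivity
  rcases min_choice ((σ ^ (1 + ν) / L₀) ^ (1 / ν)) (σ / L₁) with h | h <;> rw [h] at hβ
  · have hβν : L₀ * β ^ ν = σ ^ (1 + ν) := by
      rw [hβ, ← rpow_mul (by positivity), one_div_mul_cancel hν.ne', rpow_one]
      field_simp
    have : L₀ ^ (1 / (1 + ν)) * β ^ (1 - 1 / (1 + ν)) = σ := by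
      rw [show 1 - 1 / (1 + ν) = ν * (1 / (1 + ν)) by field_simp; ring, rpow_mul hβ0,
        ← mul_rpow hL₀.le (by positivity), hβν, ← rpow_mul hσ, mul_one_div_cancel (by linarith),
        rpow_one]
    linarith [mul_nonneg hL₁.le hβ0]
  · have : L₁ * β = σ := by rw [hβ, mul_div_cancel₀ _ hL₁.ne']
    linarith [mul_nonneg (rpow_nonneg hL₀.le (1 / (1 + ν))) (rpow_nonneg hβ0 (1 - 1 / (1 + ν)))]

theorem rpow_sub_one_mul_growth_bound_le {p c L₁ σ β Δ : ℝ} (hp : p ≤ 1) (hc : 0 ≤ c) (hβ : 0 ≤ β)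
    (hΔ : 0 ≤ Δ) (hs : 0 < β + Δ) (hσ : σ ≤ c * β ^ (1 - p) + L₁ * β) :
    (β + Δ) ^ (p - 1) * (σ + c * Δ ^ (1 - p) + L₁ * Δ) ≤ 2 * c + L₁ * (β + Δ) ^ p := by
  set s := β + Δ
  have hc_term {t : ℝ} (ht : 0 ≤ t) (hts : t ≤ s) : s ^ (p - 1) * (c * t ^ (1 - p)) ≤ c := by
    rw [mul_left_comm]
    exact mul_le_of_le_one_right hc (rpow_sub_one_mul_rpow_one_sub_le_one hp hs ht hts)
  have hL_term : s ^ (p - 1) * (L₁ * s) = L₁ * s ^ p := by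
    rw [rpow_sub_one hs.ne']; field_simp
  calc s ^ (p - 1) * (σ + c * Δ ^ (1 - p) + L₁ * Δ)
      ≤ s ^ (p - 1) * (c * β ^ (1 - p) + c * Δ ^ (1 - p) + L₁ * s) :=
        mul_le_mul_of_nonneg_left (by linarith) (by positivity)
    _ = s ^ (p - 1) * (c * β ^ (1 - p)) + s ^ (p - 1) * (c * Δ ^ (1 - p))
        + s ^ (p - 1) * (L₁ * s) := by ring
    _ ≤ 2 * c + L₁ * s ^ p := by
      rw [hL_term]
      linarith [hc_term hβ (by linarith), hc_term hΔ (by linarith)]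

theorem holder_smooth_grad_h_bound {d : ℕ}
    (f : EuclideanSpace ℝ (Fin d) → ℝ) (xstar : EuclideanSpace ℝ (Fin d))
    (ν σ L₀ L₁ β : ℝ)
    (hf : Differentiable ℝ f) (hmin : ∀ y, f xstar ≤ f y)
    (hν : ν ∈ Set.Icc (0 : ℝ) 1) (hσ : 0 ≤ σ) (hL₀ : 0 < L₀) (hL₁ : 0 < L₁)
    (hν0 : ν = 0 → σ = 0)
    (hgrad : ∀ x, ‖gradient f x‖ ≤
      Real.sqrt (σ ^ 2 + L₀ ^ (2 / (1 + ν)) * (f x - f xstar) ^ (2 * ν / (1 + ν))) +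
        L₁ * (f x - f xstar))
    (hβ : β = min ((σ ^ (1 + ν) / L₀) ^ (1 / ν)) (σ / L₁))
    (h : EuclideanSpace ℝ (Fin d) → ℝ)
    (hh : ∀ x, h x = (β + f x - f xstar) ^ (1 / (1 + ν))) :
    ∀ x, ‖gradient h x‖ ≤
      2 / (1 + ν) * L₀ ^ (1 / (1 + ν)) + 1 / (1 + ν) * L₁ * h x := by
  intro x
  have hν1 : 0 < 1 + ν := by linarith [hν.1]
  set p := 1 / (1 + ν) with hp
  have hp1 : p ≤ 1 := by rw [hp, div_le_one hν1]; linarith [hν.1]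
  have hΔ : 0 ≤ f x - f xstar := sub_nonneg.2 (hmin x)
  have hβ0 : 0 ≤ β := hβ ▸ le_min (by positivity) (by positivity)
  have hh' (y) : h y = (β + (f y - f xstar)) ^ p := by rw [hh, add_sub_assoc]
  set s := β + (f x - f xstar)
  rcases (add_nonneg hβ0 hΔ : 0 ≤ s).eq_or_lt with hs | hs
  · have hx_min : IsLocalMin h x := Filter.Eventually.of_forall fun y => by
      rw [hh', hh', ← hs, zero_rpow (by positivity)]
      exact rpow_nonneg (add_nonneg hβ0 (sub_nonneg.2 (hmin y))) _
    rw [hx_min.gradient_eq_zero, norm_zero, hh']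
    positivity
  have hgrad_h : HasGradientAt h ((p * s ^ (p - 1)) • gradient f x) x := by
    have hg : HasDerivAt (fun t => (β + (t - f xstar)) ^ p) (p * s ^ (p - 1)) (f x) := by
      simpa using ((hasDerivAt_id (f x)).sub_const (f xstar)).const_add β |>.rpow_const
        (p := p) (Or.inl hs.ne')
    exact funext hh' ▸ hg.comp_hasGradientAt (hf x).hasGradientAt
  have hgrad_f : ‖gradient f x‖ ≤
      σ + L₀ ^ p * (f x - f xstar) ^ (1 - p) + L₁ * (f x - f xstar) := by
    have hsqrt := sqrt_sq_add_rpow_two_mul_le (p := p) (q := 1 - p) hσ hL₀.le hΔ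
    rw [show 2 * p = 2 / (1 + ν) by ring,
      show 2 * (1 - p) = 2 * ν / (1 + ν) by rw [hp]; field_simp; ring] at hsqrt
    linarith [hgrad x]
  have hσ_le := le_rpow_mul_rpow_add_mul_of_eq_min hν.1 hσ hL₀ hL₁ hν0 hβ
  rw [hgrad_h.gradient, norm_smul, norm_of_nonneg (by positivity), hh', mul_assoc]
  calc p * (s ^ (p - 1) * ‖gradient f x‖)
      ≤ p * (s ^ (p - 1) * (σ + L₀ ^ p * (f x - f xstar) ^ (1 - p) + L₁ * (f x - f xstar))) := by
        gcongr
    _ ≤ p * (2 * L₀ ^ p + L₁ * s ^ p) := by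
      gcongr
      exact rpow_sub_one_mul_growth_bound_le hp1 (by positivity) hβ0 hΔ hs hσ_le
    _ = 2 / (1 + ν) * L₀ ^ p + 1 / (1 + ν) * L₁ * s ^ p := by ring
end

section
/- Let f : ℝ^d → ℝ be continuously differentiable with global minimizer x* and γ ∈ (0,1]. Then f is γ-quasar-convex, i.e., f(t x* + (1-t)x) ≤ γ t f* + (1 - γ t) f(x) for all x and t ∈ [0,1], if and only if γ(f(x) - f*) ≤ ⟨x - x*, ∇f(x)⟩ for all x. -/
/-!
Restrict `f` to the segment `r ↦ x + r • (xstar - x)`. At `r = 0`, quasar-convexity bounds the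
right difference quotients by `-γ (f x - f xstar)`, and in the limit this is the gradient
inequality at `x`. Conversely, the gradient inequality at the points of the segment is the
differential inequality `(1 - r) u' ≤ -γ u` for `u r = f (x + r • (xstar - x)) - f xstar`; since
`u ≥ 0` and `γ ≤ 1` it makes `u r / (1 - γ r)` nonincreasing on `[0, 1)`, which is
quasar-convexity for `t < 1`. At `t = 1` the inequality is just minimality of `xstar`.
-/

open Set Filter Topology AffineMap
open scoped RealInnerProductSpace

def QuasarConvex {E : Type*} [AddCommGroup E] [Module ℝ E]
    (γ : ℝ) (f : E → ℝ) (xstar : E) : Prop :=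
  ∀ x, ∀ t ∈ Icc (0 : ℝ) 1, f (t • xstar + (1 - t) • x) ≤ γ * t * f xstar + (1 - γ * t) * f x

theorem HasDerivAt.le_of_eventually_le_add_mul {g : ℝ → ℝ} {g' a c : ℝ}
    (hg : HasDerivAt g g' a) (hle : ∀ᶠ t in 𝓝[>] a, g t ≤ g a + (t - a) * c) : g' ≤ c := by
  refine le_of_tendsto ((hasDerivAt_iff_tendsto_slope.mp hg).mono_left (nhdsGT_le_nhdsNE a)) ?_
  filter_upwards [hle, self_mem_nhdsWithin] with t ht hat
  have hta : 0 < t - a := sub_pos.mpr hat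
  rw [slope_def_field, div_le_iff₀ hta]
  linarith

theorem le_one_sub_mul_of_hasDerivAt {u u' : ℝ → ℝ} {γ t : ℝ} (hγ0 : 0 ≤ γ) (hγ1 : γ ≤ 1)
    (ht0 : 0 ≤ t) (ht1 : t < 1) (hu : ∀ r ∈ Icc 0 t, HasDerivAt u (u' r) r)
    (hu0 : ∀ r ∈ Icc 0 t, 0 ≤ u r) (hu' : ∀ r ∈ Icc 0 t, γ * u r ≤ (r - 1) * u' r) :
    u t ≤ (1 - γ * t) * u 0 := by
  have hden : ∀ r ∈ Icc 0 t, 0 < 1 - γ * r := fun r hr => by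
    nlinarith [hr.1, hr.2]
  have hanti : AntitoneOn (fun r => u r / (1 - γ * r)) (Icc 0 t) := by
    refine antitoneOn_of_hasDerivWithinAt_nonpos (convex_Icc 0 t)
      (f' := fun r => (u' r * (1 - γ * r) - u r * -γ) / (1 - γ * r) ^ 2)
      (fun r hr => ((hu r hr).continuousAt.div (by fun_prop) (hden r hr).ne').continuousWithinAt)
      (fun r hr => ?_) (fun r hr => ?_)
    all_goals rw [interior_Icc] at hr; have hr' : r ∈ Icc 0 t := Ioo_subset_Icc_self hr
    · have hlin : HasDerivAt (fun r => 1 - γ * r) (-γ) r := by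
        simpa using ((hasDerivAt_id r).const_mul γ).const_sub 1
      exact ((hu r hr').fun_div hlin (hden r hr').ne').hasDerivWithinAt
    · refine div_nonpos_of_nonpos_of_nonneg ?_ (sq_nonneg _)
      have hbound : (1 - r) * (u' r * (1 - γ * r) - u r * -γ) ≤ γ * r * (γ - 1) * u r := by
        nlinarith [mul_le_mul_of_nonneg_right (hu' r hr') (hden r hr').le]
      have hneg : γ * r * (γ - 1) * u r ≤ 0 :=
        mul_nonpos_of_nonpos_of_nonneg
          (mul_nonpos_of_nonneg_of_nonpos (mul_nonneg hγ0 hr'.1) (by linarith)) (hu0 r hr')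
      exact nonpos_of_mul_nonpos_right (hbound.trans hneg) (by linarith [hr.2])
  have := hanti (left_mem_Icc.mpr ht0) (right_mem_Icc.mpr ht0) ht0
  simp only [mul_zero, sub_zero, div_one] at this
  rwa [div_le_iff₀ (hden t (right_mem_Icc.mpr ht0)), mul_comm] at this

theorem smul_add_one_sub_smul_eq_lineMap {E : Type*} [AddCommGroup E] [Module ℝ E] (x y : E)
    (t : ℝ) : t • y + (1 - t) • x = lineMap x y t :=
  (add_comm _ _).trans (lineMap_apply_module x y t).symm

section InnerProductSpace

variable {E : Type*} [NormedAddCommGroup E] [InnerProductSpace ℝ E] [CompleteSpace E]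
  {f : E → ℝ} {γ : ℝ} {x xstar : E}

theorem HasGradientAt.hasDerivAt_comp_lineMap {f' y : E} {t : ℝ}
    (hf : HasGradientAt f f' (lineMap x y t)) :
    HasDerivAt (fun s => f (lineMap x y s)) ⟪f', y - x⟫ t := by
  have := (hasGradientAt_iff_hasFDerivAt.mp hf).comp_hasDerivAt t hasDerivAt_lineMap
  rwa [InnerProductSpace.toDual_apply_apply] at this

theorem QuasarConvex.mul_sub_le_inner_gradient (h : QuasarConvex γ f xstar)
    (hx : DifferentiableAt ℝ f x) : γ * (f x - f xstar) ≤ ⟪x - xstar, gradient f x⟫ := by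
  have hg : HasDerivAt (fun s : ℝ => f (lineMap x xstar s)) ⟪gradient f x, xstar - x⟫ 0 :=
    HasGradientAt.hasDerivAt_comp_lineMap (by simpa using hx.hasGradientAt)
  have hslope := hg.le_of_eventually_le_add_mul (c := -(γ * (f x - f xstar))) <| by
    filter_upwards [Ioo_mem_nhdsGT zero_lt_one] with t ht
    have := h x t (Ioo_subset_Icc_self ht)
    rw [smul_add_one_sub_smul_eq_lineMap] at this
    simp only [lineMap_apply_zero]
    linarith
  rw [← neg_sub x xstar, inner_neg_right, real_inner_comm] at hslope
  linarith

theorem quasarConvex_of_mul_sub_le_inner_gradient (hf : Differentiable ℝ f)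
    (hmin : ∀ y, f xstar ≤ f y) (hγ0 : 0 ≤ γ) (hγ1 : γ ≤ 1)
    (h : ∀ x, γ * (f x - f xstar) ≤ ⟪x - xstar, gradient f x⟫) : QuasarConvex γ f xstar := by
  intro x t ht
  rcases ht.2.lt_or_eq with ht1 | rfl
  · have hu := le_one_sub_mul_of_hasDerivAt (u := fun r => f (lineMap x xstar r) - f xstar)
      (u' := fun r => ⟪gradient f (lineMap x xstar r), xstar - x⟫) hγ0 hγ1 ht.1 ht1
      (fun r _ => ((hf _).hasGradientAt.hasDerivAt_comp_lineMap).sub_const _)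
      (fun r _ => sub_nonneg.mpr (hmin _))
      (fun r _ => by
        have hr := h (lineMap x xstar r)
        rw [show lineMap x xstar r - xstar = (1 - r) • (x - xstar) from lineMap_vsub_right x xstar r,
          real_inner_smul_left, ← neg_sub xstar x, inner_neg_left, real_inner_comm] at hr
        linarith)
    simp only [lineMap_apply_zero] at hu
    rw [smul_add_one_sub_smul_eq_lineMap]
    linarith
  · simp only [one_smul, sub_self, zero_smul, add_zero, mul_one]
    nlinarith [hmin x]

end InnerProductSpace

theorem quasar_convex_iff_grad_condition {d : ℕ}
    (f : EuclideanSpace ℝ (Fin d) → ℝ) (xstar : EuclideanSpace ℝ (Fin d)) (γ : ℝ)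
    (hf : ContDiff ℝ 1 f) (hmin : ∀ y, f xstar ≤ f y)
    (hγ : γ ∈ Set.Ioc (0 : ℝ) 1) :
    (∀ x, ∀ t ∈ Set.Icc (0 : ℝ) 1,
        f (t • xstar + (1 - t) • x) ≤ γ * t * f xstar + (1 - γ * t) * f x) ↔
    (∀ x, γ * (f x - f xstar) ≤ ⟪x - xstar, gradient f x⟫) :=
  have hdiff : Differentiable ℝ f := hf.differentiable one_ne_zero
  ⟨fun h x => QuasarConvex.mul_sub_le_inner_gradient h (hdiff x),
    quasarConvex_of_mul_sub_le_inner_gradient hdiff hmin hγ.1.le hγ.2⟩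
end

section
/- Let p ∈ (0,1/2], γ ∈ (0,1], and let (Δ_k), (δ_k) be non-negative real sequences. Let α_k ∈ [0, 1/γ) and π_k > 0 satisfy π_k(1 - γ α_k) = π_{k-1} with π₀ > 0, and assume π_k Δ_k ≤ δ_k + p γ Σ_{i=1}^k α_i π_i Δ_i for all k ≥ 1. Then Σ_{i=1}^k α_i π_i Δ_i ≤ Σ_{i=1}^k α_i δ_i (π_k/π_{i-1})^p for all k ≥ 1. -/
/-!
Put `τ_k = ∑_{i ≤ k} α_i w_i Δ_i`. Multiplying the hypothesis at step `k` by `α_k ≥ 0` gives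
`(1 - p γ α_k) τ_k ≤ τ_{k-1} + α_k δ_k`, and Bernoulli's inequality
`(w_{k-1} / w_k)^p = (1 - γ α_k)^p ≤ 1 - p γ α_k` turns this into
`τ_k / w_k^p ≤ (τ_{k-1} + α_k δ_k) / w_{k-1}^p`.
Summing these telescoping bounds and multiplying by `w_k^p` gives the claim.
-/

open Real

lemma le_sum_Icc_of_le_add {S c : ℕ → ℝ} (h0 : S 0 ≤ 0) (hstep : ∀ n, S (n + 1) ≤ S n + c (n + 1))
    (k : ℕ) : S k ≤ ∑ i ∈ Finset.Icc 1 k, c i := by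
  induction k with
  | zero => simpa using h0
  | succ n ih =>
    rw [Finset.sum_Icc_succ_top (Nat.le_add_left 1 n)]
    linarith [hstep n]

lemma one_sub_rpow_le_one_sub_mul {x p : ℝ} (hx : x ≤ 1) (hp0 : 0 ≤ p) (hp1 : p ≤ 1) :
    (1 - x) ^ p ≤ 1 - p * x := by
  simpa [← sub_eq_add_neg] using rpow_one_add_le_one_add_mul_self (s := -x) (by linarith) hp0 hp1

lemma div_rpow_le_div_rpow_of_le_add_mul {p γ a d D τ w w' : ℝ} (hp0 : 0 ≤ p) (hp1 : p ≤ 1)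
    (ha : 0 ≤ a) (hw : 0 < w) (hw' : 0 < w') (hrec : w * (1 - γ * a) = w')
    (hτ : 0 ≤ τ + a * w * D) (hmain : w * D ≤ d + p * γ * (τ + a * w * D)) :
    (τ + a * w * D) / w ^ p ≤ (τ + a * d) / w' ^ p := by
  have hratio : w' / w = 1 - γ * a := by
    rw [div_eq_iff hw.ne', ← hrec, mul_comm]
  have hγa : γ * a ≤ 1 := by
    have := (div_pos hw' hw).le
    linarith
  have hlinear : (1 - p * (γ * a)) * (τ + a * w * D) ≤ τ + a * d := by
    have := mul_le_mul_of_nonneg_left hmain ha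
    linarith
  have hbernoulli : w' ^ p / w ^ p * (τ + a * w * D) ≤ τ + a * d := by
    rw [← div_rpow hw'.le hw.le, hratio]
    exact (mul_le_mul_of_nonneg_right (one_sub_rpow_le_one_sub_mul hγa hp0 hp1) hτ).trans hlinear
  have hwp := rpow_pos_of_pos hw p
  have hwp' := rpow_pos_of_pos hw' p
  rw [div_le_div_iff₀ hwp hwp']
  rw [div_mul_eq_mul_div, div_le_iff₀ hwp] at hbernoulli
  linarith

theorem weighted_sequence_lemma_quasar_general (p γ : ℝ)
    (hp0 : 0 < p) (hp2 : p ≤ 1 / 2)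
    (Δ δ α w : ℕ → ℝ)
    (hΔ : ∀ k, 0 ≤ Δ k)
    (hα : ∀ k, 1 ≤ k → 0 ≤ α k ∧ α k < 1 / γ)
    (hwpos : ∀ k, 0 < w k)
    (hrec : ∀ k, 1 ≤ k → w k * (1 - γ * α k) = w (k - 1))
    (hmain : ∀ k, 1 ≤ k →
      w k * Δ k ≤ δ k + p * γ * ∑ i ∈ Finset.Icc 1 k, α i * w i * Δ i) :
    ∀ k, 1 ≤ k →
      ∑ i ∈ Finset.Icc 1 k, α i * w i * Δ i ≤
        ∑ i ∈ Finset.Icc 1 k, α i * δ i * (w k / w (i - 1)) ^ p := by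
  set τ : ℕ → ℝ := fun k ↦ ∑ i ∈ Finset.Icc 1 k, α i * w i * Δ i with hτ
  have hτ_succ (n : ℕ) : τ (n + 1) = τ n + α (n + 1) * w (n + 1) * Δ (n + 1) :=
    Finset.sum_Icc_succ_top (Nat.le_add_left 1 n) _
  have hτ_nonneg (n : ℕ) : 0 ≤ τ n := Finset.sum_nonneg fun i hi ↦
    mul_nonneg (mul_nonneg (hα i (Finset.mem_Icc.1 hi).1).1 (hwpos i).le) (hΔ i)
  have hnormalized (k : ℕ) :
      τ k / w k ^ p ≤ ∑ i ∈ Finset.Icc 1 k, α i * δ i / w (i - 1) ^ p := by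
    refine le_sum_Icc_of_le_add (S := fun k ↦ τ k / w k ^ p) (c := fun i ↦ α i * δ i / w (i - 1) ^ p)
      (by simp [hτ]) (fun n ↦ ?_) k
    have h := div_rpow_le_div_rpow_of_le_add_mul hp0.le (by linarith) (hα (n + 1) n.succ_pos).1
      (hwpos _) (hwpos n) (hrec (n + 1) n.succ_pos) (hτ_succ n ▸ hτ_nonneg _)
      (by rw [← hτ_succ]; exact hmain (n + 1) n.succ_pos)
    rw [← hτ_succ, add_div] at h
    simpa only [Nat.add_sub_cancel, mul_div_assoc] using h
  intro k _
  calc τ k ≤ w k ^ p * ∑ i ∈ Finset.Icc 1 k, α i * δ i / w (i - 1) ^ p :=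
        (div_le_iff₀' (rpow_pos_of_pos (hwpos k) p)).1 (hnormalized k)
    _ = ∑ i ∈ Finset.Icc 1 k, α i * δ i * (w k / w (i - 1)) ^ p := by
      rw [Finset.mul_sum]
      refine Finset.sum_congr rfl fun i _ ↦ ?_
      rw [div_rpow (hwpos k).le (hwpos _).le]
      ring

theorem weighted_sequence_lemma_quasar (p γ : ℝ)
    (hp0 : 0 < p) (hp2 : p ≤ 1 / 2) (hγ : γ ∈ Set.Ioc (0 : ℝ) 1)
    (Δ δ α w : ℕ → ℝ)
    (hΔ : ∀ k, 0 ≤ Δ k) (hδ : ∀ k, 0 ≤ δ k)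
    (hα : ∀ k, 1 ≤ k → 0 ≤ α k ∧ α k < 1 / γ)
    (hwpos : ∀ k, 0 < w k)
    (hrec : ∀ k, 1 ≤ k → w k * (1 - γ * α k) = w (k - 1))
    (hmain : ∀ k, 1 ≤ k →
      w k * Δ k ≤ δ k + p * γ * ∑ i ∈ Finset.Icc 1 k, α i * w i * Δ i) :
    ∀ k, 1 ≤ k →
      ∑ i ∈ Finset.Icc 1 k, α i * w i * Δ i ≤
        ∑ i ∈ Finset.Icc 1 k, α i * δ i * (w k / w (i - 1)) ^ p :=
  weighted_sequence_lemma_quasar_general p γ hp0 hp2 Δ δ α w hΔ hα hwpos hrec hmain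
end

section
/- Let f : ℝ → ℝ be continuous, x* a global minimizer, γ ∈ (0,1], and suppose p(t) = f(x* + t(x - x*)) - f* satisfies p(t') - p(t) ≥ ∫_t^{t'} (γ/s) p(s) ds for all 0 < t < t' ≤ 1 (so p is non-decreasing on (0,1]). Then p(c) ≤ c^γ p(1) ≤ (1 - γ(1-c)) p(1) for all c ∈ [0,1]. -/
open Real

theorem quasar_one_dim_integral_inequality (f : ℝ → ℝ) (xstar x γ : ℝ) (p : ℝ → ℝ)
    (hf : Continuous f) (hmin : ∀ y, f xstar ≤ f y) (hγ : γ ∈ Set.Ioc (0 : ℝ) 1)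
    (hp : ∀ t, p t = f (xstar + t * (x - xstar)) - f xstar)
    (hint : ∀ t t' : ℝ, 0 < t → t < t' → t' ≤ 1 →
      p t' - p t ≥ ∫ s in t..t', (γ / s) * p s) :
    ∀ c ∈ Set.Icc (0 : ℝ) 1,
      p c ≤ c ^ γ * p 1 ∧ c ^ γ * p 1 ≤ (1 - γ * (1 - c)) * p 1 := by
  obtain ⟨hγ0, hγ1⟩ := hγ
  have hpc : Continuous p := by
    have : p = fun t => f (xstar + t * (x - xstar)) - f xstar := funext hp
    rw [this]; fun_prop
  have hpnn : ∀ t, 0 ≤ p t := fun t => by rw [hp t]; linarith [hmin (xstar + t * (x - xstar))]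
  intro c hc
  obtain ⟨hc0, hc1⟩ := hc
  -- second inequality first
  have bern : c ^ γ ≤ 1 - γ * (1 - c) := by
    have := rpow_one_add_le_one_add_mul_self (s := c - 1) (by linarith) hγ0.le hγ1
    have h1 : (1 : ℝ) + (c - 1) = c := by ring
    rw [h1] at this
    linarith
  have second : c ^ γ * p 1 ≤ (1 - γ * (1 - c)) * p 1 :=
    mul_le_mul_of_nonneg_right bern (hpnn 1)
  refine ⟨?_, second⟩
  -- first inequality
  rcases eq_or_lt_of_le hc0 with h0 | hcpos
  · -- c = 0
    have : p 0 = 0 := by rw [hp 0]; simp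
    rw [← h0, this, Real.zero_rpow hγ0.ne', zero_mul]
  rcases eq_or_lt_of_le hc1 with h1 | hclt
  · rw [h1, Real.one_rpow, one_mul]
  -- 0 < c < 1
  set g : ℝ → ℝ := fun s => (γ / max s c) * p s with hg
  have hgc : Continuous g := by
    apply Continuous.mul _ hpc
    exact continuous_const.div (continuous_id.max continuous_const)
      (fun s => by positivity)
  set F : ℝ → ℝ := fun t => ∫ s in c..t, g s with hF
  have hFd : ∀ t : ℝ, HasDerivAt F (g t) t := fun t => (hgc.integral_hasStrictDerivAt c t).hasDerivAt
  -- p t ≥ p c + F t on [c,1]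
  have key : ∀ t ∈ Set.Icc c 1, p c + F t ≤ p t := by
    intro t ⟨htc, ht1⟩
    rcases eq_or_lt_of_le htc with h | h
    · rw [← h]; simp [hF]
    · have hi := hint c t hcpos h ht1
      have heq : (∫ s in c..t, (γ / s) * p s) = F t := by
        apply intervalIntegral.integral_congr
        intro s hs
        rw [Set.uIcc_of_le htc] at hs
        simp only [hg]
        rw [max_eq_left hs.1]
      rw [heq] at hi
      linarith
  set G : ℝ → ℝ := fun t => (p c + F t) * t ^ (-γ) with hG
  have hGd : ∀ t : ℝ, 0 < t → HasDerivAt G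
      (g t * t ^ (-γ) + (p c + F t) * (-γ * t ^ (-γ - 1))) t := by
    intro t ht
    exact ((hFd t).const_add (p c)).mul (Real.hasDerivAt_rpow_const (Or.inl ht.ne'))
  have hmono : MonotoneOn G (Set.Icc c 1) := by
    apply monotoneOn_of_deriv_nonneg (convex_Icc c 1)
    · intro t ht
      exact ((hGd t (lt_of_lt_of_le hcpos ht.1)).continuousAt).continuousWithinAt
    · intro t ht
      rw [interior_Icc] at ht
      exact ((hGd t (lt_trans hcpos ht.1)).differentiableAt).differentiableWithinAt
    · intro t ht
      rw [interior_Icc] at ht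
      have htpos : 0 < t := lt_trans hcpos ht.1
      rw [(hGd t htpos).deriv]
      have hgt : g t = (γ / t) * p t := by
        simp only [hg]; rw [max_eq_left ht.1.le]
      have hk := key t ⟨ht.1.le, ht.2.le⟩
      have hrp : t ^ (-γ - 1) = t ^ (-γ) / t := by
        rw [Real.rpow_sub htpos, Real.rpow_one]
      rw [hgt, hrp]
      have heq : γ / t * p t * t ^ (-γ) + (p c + F t) * (-γ * (t ^ (-γ) / t)) =
          γ * (t ^ (-γ) / t) * (p t - (p c + F t)) := by ring
      rw [heq]
      apply mul_nonneg (by positivity) (by linarith)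
  have hGc : G c = p c * c ^ (-γ) := by simp [hG, hF]
  have hG1 : G 1 = p c + F 1 := by simp [hG, Real.one_rpow]
  have hle := hmono (Set.left_mem_Icc.2 hclt.le) (Set.right_mem_Icc.2 hclt.le) hclt.le
  rw [hGc, hG1] at hle
  have hkey1 := key 1 (Set.right_mem_Icc.2 hclt.le)
  have hfin : p c * c ^ (-γ) ≤ p 1 := le_trans hle hkey1
  have hcγ : (0:ℝ) < c ^ γ := Real.rpow_pos_of_pos hcpos _
  have := mul_le_mul_of_nonneg_right hfin hcγ.le
  have hcc : c ^ (-γ) * c ^ γ = 1 := by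
    rw [← Real.rpow_add hcpos]; simp
  calc p c = p c * c ^ (-γ) * c ^ γ := by rw [mul_assoc, hcc, mul_one]
    _ ≤ p 1 * c ^ γ := this
    _ = c ^ γ * p 1 := mul_comm _ _
end

section
/- Let f : ℝ^d → ℝ be convex with minimizer x*, ‖x*‖ ≤ R, and suppose all subgradients satisfy ‖∇f(x)‖ ≤ M₀ + M₁(f(x) - f*). For the projected subgradient step x' = proj_{Q_R}(x - η∇f(x)) with η > 0 and F = max_{Q_R}(f - f*), if x ∈ Q_R then ½‖x' - x*‖² ≤ ½‖x - x*‖² - η(f(x) - f*) + η²M₀² + η²M₁²F(f(x) - f*). In particular, if 2η M₁² F ≤ 1 then ½‖x' - x*‖² ≤ ½‖x - x*‖² - (η/2)(f(x) - f*) + η²M₀². -/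
open Real
open scoped RealInnerProductSpace

section InnerProductSpace

variable {E : Type*} [NormedAddCommGroup E] [InnerProductSpace ℝ E]

theorem norm_smul_sub_le_norm_sub {t : ℝ} {y z : E} (ht₀ : 0 ≤ t) (ht₁ : t ≤ 1)
    (hz : ‖z‖ ≤ t * ‖y‖) : ‖t • y - z‖ ≤ ‖y - z‖ := by
  have hyz : ⟪y, z⟫ ≤ t * ‖y‖ ^ 2 :=
    calc ⟪y, z⟫ ≤ ‖y‖ * ‖z‖ := real_inner_le_norm y z
      _ ≤ ‖y‖ * (t * ‖y‖) := mul_le_mul_of_nonneg_left hz (norm_nonneg y)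
      _ = t * ‖y‖ ^ 2 := by ring
  have hdiff : ‖y - z‖ ^ 2 - ‖t • y - z‖ ^ 2 = (1 - t) * ((1 + t) * ‖y‖ ^ 2 - 2 * ⟪y, z⟫) := by
    rw [norm_sub_sq_real, norm_sub_sq_real, real_inner_smul_left, norm_smul,
      Real.norm_of_nonneg ht₀]
    ring
  -- the bracket is at least `(1 - t) * ‖y‖ ^ 2`
  have hbracket : 0 ≤ (1 + t) * ‖y‖ ^ 2 - 2 * ⟪y, z⟫ := by
    nlinarith [mul_nonneg (sub_nonneg.mpr ht₁) (sq_nonneg ‖y‖)]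
  rw [← pow_le_pow_iff_left₀ (norm_nonneg _) (norm_nonneg _) two_ne_zero]
  nlinarith [mul_nonneg (sub_nonneg.mpr ht₁) hbracket]

theorem half_norm_sub_smul_sub_sq_le {x z v : E} {η D : ℝ} (hη : 0 ≤ η)
    (hD : D ≤ ⟪v, x - z⟫) :
    1 / 2 * ‖x - η • v - z‖ ^ 2 ≤ 1 / 2 * ‖x - z‖ ^ 2 - η * D + η ^ 2 / 2 * ‖v‖ ^ 2 := by
  have hexpand : ‖x - η • v - z‖ ^ 2 = ‖x - z‖ ^ 2 - 2 * η * ⟪v, x - z⟫ + η ^ 2 * ‖v‖ ^ 2 := by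
    rw [sub_right_comm, norm_sub_sq_real, real_inner_smul_right, norm_smul,
      Real.norm_of_nonneg hη, real_inner_comm]
    ring
  rw [hexpand]
  linarith [mul_le_mul_of_nonneg_left hD hη]

theorem sub_le_inner_of_le_add_inner {f : E → ℝ} {v x y : E} (h : f x + ⟪v, y - x⟫ ≤ f y) :
    f x - f y ≤ ⟪v, x - y⟫ := by
  rw [← neg_sub x y, inner_neg_right] at h
  linarith

theorem ConvexOn.le_csSup_image_of_isCompact [FiniteDimensional ℝ E] {f : E → ℝ} {K : Set E}
    {x : E} (hf : ConvexOn ℝ Set.univ f) (hK : IsCompact K) (hx : x ∈ K) :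
    f x ≤ sSup (f '' K) :=
  le_csSup (hK.bddAbove_image ((hf.continuousOn isOpen_univ).mono (Set.subset_univ K)))
    ⟨x, hx, rfl⟩

end InnerProductSpace

section Projection

variable {d : ℕ} {R : ℝ}

theorem projR_of_norm_le {y : EuclideanSpace ℝ (Fin d)} (hy : ‖y‖ ≤ R) : projR R y = y := by
  rcases eq_or_ne y 0 with rfl | hy₀
  · simp [projR]
  · rw [projR, min_eq_left ((one_le_div (norm_pos_iff.mpr hy₀)).mpr hy), one_smul]

theorem projR_of_lt_norm {y : EuclideanSpace ℝ (Fin d)} (hy : R < ‖y‖) :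
    projR R y = (R / ‖y‖) • y := by
  rw [projR, min_eq_right (div_le_one_of_le₀ hy.le (norm_nonneg y))]

theorem norm_projR_sub_le {y z : EuclideanSpace ℝ (Fin d)} (hz : ‖z‖ ≤ R) :
    ‖projR R y - z‖ ≤ ‖y - z‖ := by
  rcases le_or_gt ‖y‖ R with hy | hy
  · rw [projR_of_norm_le hy]
  · have hy₀ : 0 < ‖y‖ := (norm_nonneg z).trans_lt (hz.trans_lt hy)
    rw [projR_of_lt_norm hy]
    refine norm_smul_sub_le_norm_sub (div_nonneg ((norm_nonneg z).trans hz) hy₀.le)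
      (div_le_one_of_le₀ hy.le hy₀.le) ?_
    rwa [div_mul_cancel₀ R hy₀.ne']

end Projection

theorem projected_subgradient_one_step_general {d : ℕ}
    (f : EuclideanSpace ℝ (Fin d) → ℝ)
    (g : EuclideanSpace ℝ (Fin d) → EuclideanSpace ℝ (Fin d))
    (xstar x x' : EuclideanSpace ℝ (Fin d)) (R M₀ M₁ F η : ℝ)
    (hconv : ConvexOn ℝ Set.univ f)
    (hmin : ∀ y, f xstar ≤ f y) (hxs : ‖xstar‖ ≤ R)
    (hsub : ∀ z y, f z + ⟪g z, y - z⟫ ≤ f y)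
    (hgb : ∀ z, ‖g z‖ ≤ M₀ + M₁ * (f z - f xstar))
    (hF : F = sSup ((fun z => f z - f xstar) '' Metric.closedBall 0 R))
    (hη : 0 < η) (hx : x ∈ Metric.closedBall (0 : EuclideanSpace ℝ (Fin d)) R)
    (hstep : x' = projR R (x - η • g x)) :
    (1 / 2 : ℝ) * ‖x' - xstar‖ ^ 2 ≤
      1 / 2 * ‖x - xstar‖ ^ 2 - η * (f x - f xstar) +
        η ^ 2 * M₀ ^ 2 + η ^ 2 * M₁ ^ 2 * F * (f x - f xstar) ∧
    (2 * η * M₁ ^ 2 * F ≤ 1 →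
      (1 / 2 : ℝ) * ‖x' - xstar‖ ^ 2 ≤
        1 / 2 * ‖x - xstar‖ ^ 2 - η / 2 * (f x - f xstar) + η ^ 2 * M₀ ^ 2) := by
  have hgap₀ : 0 ≤ f x - f xstar := sub_nonneg.mpr (hmin x)
  have hgapF : f x - f xstar ≤ F :=
    hF ▸ (hconv.add_const (-f xstar)).le_csSup_image_of_isCompact (isCompact_closedBall 0 R) hx
  have hgrad : ‖g x‖ ^ 2 ≤ 2 * M₀ ^ 2 + 2 * M₁ ^ 2 * (f x - f xstar) ^ 2 := by
    have := (pow_le_pow_left₀ (norm_nonneg _) (hgb x) 2).trans add_sq_le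
    linarith [mul_pow M₁ (f x - f xstar) 2]
  have hproj : ‖x' - xstar‖ ^ 2 ≤ ‖x - η • g x - xstar‖ ^ 2 :=
    pow_le_pow_left₀ (norm_nonneg _) (hstep ▸ norm_projR_sub_le hxs) 2
  have hdesc := half_norm_sub_smul_sub_sq_le hη.le (sub_le_inner_of_le_add_inner (hsub x xstar))
  have hquad : M₁ ^ 2 * (f x - f xstar) ^ 2 ≤ M₁ ^ 2 * F * (f x - f xstar) := by
    rw [sq (f x - f xstar), ← mul_assoc]
    exact mul_le_mul_of_nonneg_right (mul_le_mul_of_nonneg_left hgapF (sq_nonneg M₁)) hgap₀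
  have hfirst : (1 / 2 : ℝ) * ‖x' - xstar‖ ^ 2 ≤ 1 / 2 * ‖x - xstar‖ ^ 2 - η * (f x - f xstar) +
      η ^ 2 * M₀ ^ 2 + η ^ 2 * M₁ ^ 2 * F * (f x - f xstar) := by
    linarith [mul_le_mul_of_nonneg_left hgrad (sq_nonneg η),
      mul_le_mul_of_nonneg_left hquad (sq_nonneg η)]
  refine ⟨hfirst, fun hsmall => ?_⟩
  have : η ^ 2 * M₁ ^ 2 * F * (f x - f xstar) ≤ η / 2 * (f x - f xstar) := by
    nlinarith [mul_le_mul_of_nonneg_right hsmall (mul_nonneg hη.le hgap₀)]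
  linarith

theorem projected_subgradient_one_step {d : ℕ}
    (f : EuclideanSpace ℝ (Fin d) → ℝ)
    (g : EuclideanSpace ℝ (Fin d) → EuclideanSpace ℝ (Fin d))
    (xstar x x' : EuclideanSpace ℝ (Fin d)) (R M₀ M₁ F η : ℝ)
    (hconv : ConvexOn ℝ Set.univ f)
    (hmin : ∀ y, f xstar ≤ f y) (hxs : ‖xstar‖ ≤ R)
    (hM₀ : 0 ≤ M₀) (hM₁ : 0 ≤ M₁)
    (hsub : ∀ z y, f z + ⟪g z, y - z⟫ ≤ f y)
    (hgb : ∀ z, ‖g z‖ ≤ M₀ + M₁ * (f z - f xstar))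
    (hF : F = sSup ((fun z => f z - f xstar) '' Metric.closedBall 0 R))
    (hη : 0 < η) (hx : x ∈ Metric.closedBall (0 : EuclideanSpace ℝ (Fin d)) R)
    (hstep : x' = projR R (x - η • g x)) :
    (1 / 2 : ℝ) * ‖x' - xstar‖ ^ 2 ≤
      1 / 2 * ‖x - xstar‖ ^ 2 - η * (f x - f xstar) +
        η ^ 2 * M₀ ^ 2 + η ^ 2 * M₁ ^ 2 * F * (f x - f xstar) ∧
    (2 * η * M₁ ^ 2 * F ≤ 1 →
      (1 / 2 : ℝ) * ‖x' - xstar‖ ^ 2 ≤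
        1 / 2 * ‖x - xstar‖ ^ 2 - η / 2 * (f x - f xstar) + η ^ 2 * M₀ ^ 2) :=
  projected_subgradient_one_step_general f g xstar x x' R M₀ M₁ F η hconv hmin hxs hsub hgb hF hη hx
    hstep
end
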